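/- arXiv:1407.8252 — 9 statements merged into one kernel-verified Lean document; each statement's English description precedes it below -/
import Mathlib

section
/- Fix g > 0, z > 0, q ≥ 1 and φ ∈ ℝ. If c₁ > 0 and c₂ > 0 satisfy ln c₁ − qφ + g c₁ + z c₂ = 0 and ln c₂ + qφ + g c₂ + z c₁ = 0, then with Σ := c₁ + c₂ one has: (a) c₁·c₂ = e^{−(g+z)Σ}; (b) Σ ≥ Σ_z; and (c) either (c₁, c₂) = ((Σ + √(Σ² − 4e^{−(g+z)Σ}))/2, (Σ − √(Σ² − 4e^{−(g+z)Σ}))/2) or (c₁, c₂) = ((Σ − √(Σ² − 4e^{−(g+z)Σ}))/2, (Σ + √(Σ² − 4e^{−(g+z)Σ}))/2). -/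
/-- The critical total concentration Σ_z: the unique positive solution of
Σ = 2·e^{−(g+z)Σ/2} (equivalently Σ² = 4·e^{−(g+z)Σ}). -/
noncomputable def sigmaZ (g z : ℝ) : ℝ :=
  sInf {S : ℝ | 0 < S ∧ S = 2 * Real.exp (-((g + z) * S) / 2)}

/-- if c₁, c₂ > 0 solve the two-species algebraic system, then with
Σ = c₁ + c₂ one has (a) c₁c₂ = e^{−(g+z)Σ}, (b) Σ ≥ Σ_z, and (c) (c₁,c₂) is one of
the two explicit branches. -/
theorem stmt_3 (g z q φ c₁ c₂ : ℝ) (hg : 0 < g) (hz : 0 < z) (hq : 1 ≤ q)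
    (hc₁ : 0 < c₁) (hc₂ : 0 < c₂)
    (h1 : Real.log c₁ - q * φ + g * c₁ + z * c₂ = 0)
    (h2 : Real.log c₂ + q * φ + g * c₂ + z * c₁ = 0) :
    c₁ * c₂ = Real.exp (-((g + z) * (c₁ + c₂))) ∧
    sigmaZ g z ≤ c₁ + c₂ ∧
    ((c₁ = ((c₁ + c₂) + Real.sqrt ((c₁ + c₂) ^ 2 - 4 * Real.exp (-((g + z) * (c₁ + c₂))))) / 2 ∧
      c₂ = ((c₁ + c₂) - Real.sqrt ((c₁ + c₂) ^ 2 - 4 * Real.exp (-((g + z) * (c₁ + c₂))))) / 2) ∨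
     (c₁ = ((c₁ + c₂) - Real.sqrt ((c₁ + c₂) ^ 2 - 4 * Real.exp (-((g + z) * (c₁ + c₂))))) / 2 ∧
      c₂ = ((c₁ + c₂) + Real.sqrt ((c₁ + c₂) ^ 2 - 4 * Real.exp (-((g + z) * (c₁ + c₂))))) / 2)) := by
  set Sig := c₁ + c₂ with hSig
  have hSigpos : 0 < Sig := by positivity
  -- part (a)
  have hsum : Real.log c₁ + Real.log c₂ = -((g + z) * Sig) := by
    simp only [hSig]; ring_nf; nlinarith [h1, h2]
  have ha : c₁ * c₂ = Real.exp (-((g + z) * Sig)) := by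
    rw [← hsum, Real.exp_add, Real.exp_log hc₁, Real.exp_log hc₂]
  refine ⟨ha, ?_, ?_⟩
  · -- part (b)
    have hE2 : Real.exp (-((g + z) * Sig)) =
        Real.exp (-((g + z) * Sig) / 2) * Real.exp (-((g + z) * Sig) / 2) := by
      rw [← Real.exp_add]; ring_nf
    have hsq : Sig ^ 2 ≥ 4 * Real.exp (-((g + z) * Sig)) := by
      nlinarith [sq_nonneg (c₁ - c₂), ha]
    have he : Sig ≥ 2 * Real.exp (-((g + z) * Sig) / 2) := by
      nlinarith [Real.exp_pos (-((g + z) * Sig) / 2), hSigpos]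
    -- find a root S₀ ∈ [0, Sig] of f S = S - 2 exp(-(g+z)S/2)
    have hcont : ContinuousOn (fun S : ℝ => S - 2 * Real.exp (-((g + z) * S) / 2))
        (Set.Icc 0 Sig) := by fun_prop
    have hiv := intermediate_value_Icc (le_of_lt hSigpos) hcont
    have h0mem : (0 : ℝ) ∈ Set.Icc ((0 : ℝ) - 2 * Real.exp (-((g + z) * 0) / 2))
        (Sig - 2 * Real.exp (-((g + z) * Sig) / 2)) := by
      constructor
      · simp
      · linarith
    obtain ⟨S₀, hS₀mem, hS₀⟩ := hiv h0mem
    have hS₀eq : S₀ = 2 * Real.exp (-((g + z) * S₀) / 2) := by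
      have := hS₀; simp at this; linarith
    have hS₀pos : 0 < S₀ := by
      rw [hS₀eq]; positivity
    have hbdd : BddBelow {S : ℝ | 0 < S ∧ S = 2 * Real.exp (-((g + z) * S) / 2)} :=
      ⟨0, fun x hx => le_of_lt hx.1⟩
    have : sigmaZ g z ≤ S₀ := csInf_le hbdd ⟨hS₀pos, hS₀eq⟩
    exact this.trans hS₀mem.2
  · -- part (c)
    have hD : Sig ^ 2 - 4 * Real.exp (-((g + z) * Sig)) = (c₁ - c₂) ^ 2 := by
      rw [← ha]; simp only [hSig]; ring
    rw [hD, Real.sqrt_sq_eq_abs]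
    rcases le_total c₂ c₁ with h | h
    · left
      rw [abs_of_nonneg (by linarith)]
      constructor <;> (simp only [hSig]; ring)
    · right
      rw [abs_of_nonpos (by linarith)]
      constructor <;> (simp only [hSig]; ring)
end

section
/- Suppose 0 < z ≤ g and q ≥ 1. Then φ_A is strictly increasing and φ_B is strictly decreasing on [Σ_z, ∞), with φ_A(Σ_z) = φ_B(Σ_z) = 0, φ_A mapping [Σ_z, ∞) bijectively onto [0, ∞) and φ_B mapping [Σ_z, ∞) bijectively onto (−∞, 0]. Consequently, the function Σ = Σ(φ), defined for φ ∈ ℝ by Σ(φ) = φ_A^{−1}(φ) for φ ≥ 0 and Σ(φ) = φ_B^{−1}(φ) for φ ≤ 0, is a well-defined single-valued function with range [Σ_z, ∞) and Σ(0) = Σ_z, and the function D(φ) := √(Σ(φ)² − 4e^{−(g+z)Σ(φ)}) for φ ≥ 0, D(φ) := −√(Σ(φ)² − 4e^{−(g+z)Σ(φ)}) for φ ≤ 0 (i.e., c₁ − c₂ as a function of φ) is strictly monotone increasing on ℝ, with derivative d/dφ (c₁ − c₂) = q·(Σ e^{(g+z)Σ} + 2(g+z)) / ((1 + gΣ) e^{(g+z)Σ}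 + g² − z²) > 0, and D(φ) → ±∞ as φ → ±∞. -/
open Set Filter

/-- The potential φ_A along branch A of the two-species system. -/
noncomputable def phiA (g z q S : ℝ) : ℝ :=
  (Real.log ((S + Real.sqrt (S ^ 2 - 4 * Real.exp (-((g + z) * S)))) / 2)
    + (g + z) / 2 * S
    + (g - z) / 2 * Real.sqrt (S ^ 2 - 4 * Real.exp (-((g + z) * S)))) / q

/-- The potential φ_B along branch B of the two-species system. -/
noncomputable def phiB (g z q S : ℝ) : ℝ :=
  (Real.log ((S - Real.sqrt (S ^ 2 - 4 * Real.exp (-((g + z) * S)))) / 2)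
    + (g + z) / 2 * S
    + (z - g) / 2 * Real.sqrt (S ^ 2 - 4 * Real.exp (-((g + z) * S)))) / q

/-!
Write `c₁ = exp u` and `c₂ = exp w`. The constraint `c₁ c₂ = exp (-(g + z) (c₁ + c₂))` shared by
both branches reads `ψ u + ψ w = 0` with `ψ u = u + (g + z) exp u`, an increasing bijection of `ℝ`,
so `w = partner u` is a decreasing function of `u` and the two branches form one curve
parametrised by `u ∈ ℝ`: branch A is `w ≤ u`, branch B is `u ≤ w`, and they meet at the fixed
point of `partner`, where `Σ = Σ_z`. Along this curve `q φ = (u - w) / 2 + (g - z) / 2 (c₁ - c₂)`,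
which is strictly increasing in `u` since `z ≤ g`, and so is `c₁ - c₂`. Hence `u ↦ φ` is an order
isomorphism of `ℝ`, `Σ(φ)` and `D(φ)` are `c₁ + c₂` and `c₁ - c₂` at the parameter `u` of
potential `φ`, and the derivative of `D` comes from the inverse function theorem, applied to `ψ`
and to `u ↦ φ`.
-/

namespace TwoSpecies

open Real

section Psi

variable {a : ℝ}

noncomputable def psi (a u : ℝ) : ℝ := u + a * exp u

theorem hasDerivAt_psi (a u : ℝ) : HasDerivAt (psi a) (1 + a * exp u) u :=
  (hasDerivAt_id u).add ((hasDerivAt_exp u).const_mul a)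

theorem continuous_psi (a : ℝ) : Continuous (psi a) := by
  unfold psi; fun_prop

theorem psi_strictMono (ha : 0 ≤ a) : StrictMono (psi a) :=
  strictMono_id.add_monotone fun _ _ h => mul_le_mul_of_nonneg_left (exp_le_exp.2 h) ha

theorem tendsto_psi_atTop (ha : 0 ≤ a) : Tendsto (psi a) atTop atTop :=
  tendsto_atTop_mono (fun u => le_add_of_nonneg_right (by positivity)) tendsto_id

theorem tendsto_psi_atBot (a : ℝ) : Tendsto (psi a) atBot atBot := by
  unfold psi
  simpa using tendsto_id.atBot_add (tendsto_exp_atBot.const_mul a)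

noncomputable def psiIso (ha : 0 ≤ a) : ℝ ≃o ℝ :=
  (psi_strictMono ha).orderIsoOfSurjective _
    ((continuous_psi a).surjective (tendsto_psi_atTop ha) (tendsto_psi_atBot a))

variable (ha : 0 ≤ a)

theorem psiIso_apply (u : ℝ) : psiIso ha u = psi a u := rfl

noncomputable def partner (u : ℝ) : ℝ := (psiIso ha).symm (-psi a u)

theorem partner_eq_iff {u w : ℝ} : partner ha u = w ↔ psi a u + psi a w = 0 := by
  rw [partner, OrderIso.symm_apply_eq, psiIso_apply, neg_eq_iff_add_eq_zero]

theorem psi_add_psi_partner (u : ℝ) : psi a u + psi a (partner ha u) = 0 :=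
  (partner_eq_iff ha).1 rfl

theorem partner_partner (u : ℝ) : partner ha (partner ha u) = u :=
  (partner_eq_iff ha).2 (by rw [add_comm, psi_add_psi_partner])

theorem partner_strictAnti : StrictAnti (partner ha) := fun _ _ h =>
  (psiIso ha).symm.strictMono (neg_lt_neg (psi_strictMono ha h))

theorem continuous_partner : Continuous (partner ha) :=
  (psiIso ha).symm.continuous.comp (continuous_psi a).neg

theorem tendsto_partner_atBot : Tendsto (partner ha) atBot atTop :=
  (psiIso ha).symm.tendsto_atTop.comp (tendsto_neg_atBot_atTop.comp (tendsto_psi_atBot a))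

theorem hasDerivAt_partner (u : ℝ) :
    HasDerivAt (partner ha) (-(1 + a * exp u) / (1 + a * exp (partner ha u))) u := by
  have hinv : HasDerivAt (psiIso ha).symm (1 + a * exp (partner ha u))⁻¹ (-psi a u) :=
    .of_local_left_inverse (psiIso ha).symm.continuous.continuousAt (hasDerivAt_psi a _)
      (by positivity) (.of_forall (psiIso ha).apply_symm_apply)
  rw [div_eq_inv_mul]
  exact hinv.comp u (hasDerivAt_psi a u).neg

end Psi

section Concentrations

variable {a : ℝ} (ha : 0 ≤ a)

noncomputable def concSum (u : ℝ) : ℝ := exp u + exp (partner ha u)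

noncomputable def concDiff (u : ℝ) : ℝ := exp u - exp (partner ha u)

theorem add_partner (u : ℝ) : u + partner ha u = -(a * concSum ha u) := by
  have := psi_add_psi_partner ha u
  unfold psi at this
  unfold concSum
  linarith

theorem exp_mul_exp_partner (u : ℝ) : exp u * exp (partner ha u) = exp (-(a * concSum ha u)) := by
  rw [← exp_add, add_partner]

theorem concSum_pos (u : ℝ) : 0 < concSum ha u := by
  unfold concSum; positivity

theorem concSum_partner (u : ℝ) : concSum ha (partner ha u) = concSum ha u := by
  rw [concSum, concSum, partner_partner, add_comm]

theorem concDiff_partner (u : ℝ) : concDiff ha (partner ha u) = -concDiff ha u := by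
  rw [concDiff, concDiff, partner_partner, neg_sub]

theorem sq_concSum_sub (u : ℝ) :
    concSum ha u ^ 2 - 4 * exp (-(a * concSum ha u)) = concDiff ha u ^ 2 := by
  rw [← exp_mul_exp_partner, concSum, concDiff]
  ring

theorem concDiff_nonneg_iff {u : ℝ} : 0 ≤ concDiff ha u ↔ partner ha u ≤ u := by
  rw [concDiff, sub_nonneg, exp_le_exp]

theorem concDiff_strictMono : StrictMono (concDiff ha) := fun _ _ h =>
  sub_lt_sub (exp_lt_exp.2 h) (exp_lt_exp.2 (partner_strictAnti ha h))

theorem tendsto_concDiff_atTop : Tendsto (concDiff ha) atTop atTop := by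
  refine tendsto_atTop_mono' _ ?_
    (tendsto_atTop_add_const_right _ (-exp (partner ha 0)) tendsto_exp_atTop)
  filter_upwards [eventually_ge_atTop 0] with u hu
  rw [concDiff, sub_eq_add_neg]
  gcongr
  exact (partner_strictAnti ha).antitone hu

theorem tendsto_concDiff_atBot : Tendsto (concDiff ha) atBot atBot := by
  refine (tendsto_neg_atTop_atBot.comp
    ((tendsto_concDiff_atTop ha).comp (tendsto_partner_atBot ha))).congr fun u => ?_
  simp only [Function.comp_apply, concDiff_partner, neg_neg]

theorem hasDerivAt_concDiff (u : ℝ) :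
    HasDerivAt (concDiff ha)
      ((concSum ha u + 2 * a * exp (-(a * concSum ha u))) / (1 + a * exp (partner ha u))) u := by
  refine ((hasDerivAt_exp u).sub (hasDerivAt_partner ha u).exp).congr_deriv ?_
  have hw : 0 < 1 + a * exp (partner ha u) := by positivity
  rw [← exp_mul_exp_partner, concSum]
  field_simp
  ring

end Concentrations

section Roots

variable {a S : ℝ}

noncomputable def logRoot (a S : ℝ) : ℝ := log ((S + √(S ^ 2 - 4 * exp (-(a * S)))) / 2)

theorem logRoot_strictMonoOn (ha : 0 ≤ a) : StrictMonoOn (logRoot a) (Ioi 0) := by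
  intro S (hS : 0 < S) T _ hST
  have hexp : exp (-(a * T)) ≤ exp (-(a * S)) := exp_le_exp.2 (by nlinarith)
  have hsqrt : √(S ^ 2 - 4 * exp (-(a * S))) ≤ √(T ^ 2 - 4 * exp (-(a * T))) :=
    sqrt_le_sqrt (by nlinarith)
  exact log_lt_log (by positivity) (by linarith)

theorem sqrt_discr_lt (hS : 0 < S) : √(S ^ 2 - 4 * exp (-(a * S))) < S := by
  rw [sqrt_lt' hS]; linarith [exp_pos (-(a * S))]

variable (ha : 0 ≤ a)

theorem partner_logRoot (hS : 0 < S) (hF : 4 * exp (-(a * S)) ≤ S ^ 2) :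
    partner ha (logRoot a S) = log ((S - √(S ^ 2 - 4 * exp (-(a * S)))) / 2) := by
  set r := √(S ^ 2 - 4 * exp (-(a * S)))
  have hr : r ^ 2 = S ^ 2 - 4 * exp (-(a * S)) := sq_sqrt (by linarith)
  have hrS : r < S := sqrt_discr_lt hS
  have hprod : (S + r) / 2 * ((S - r) / 2) = exp (-(a * S)) := by linear_combination -hr / 4
  rw [partner_eq_iff, logRoot, psi, psi, exp_log (by positivity), exp_log (by linarith)]
  rw [add_add_add_comm, ← log_mul (by positivity) (by linarith), hprod, log_exp]
  ring

theorem concSum_logRoot (hS : 0 < S) (hF : 4 * exp (-(a * S)) ≤ S ^ 2) :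
    concSum ha (logRoot a S) = S := by
  have hr := sqrt_nonneg (S ^ 2 - 4 * exp (-(a * S)))
  have hrS := sqrt_discr_lt (a := a) hS
  rw [concSum, partner_logRoot ha hS hF, logRoot, exp_log (by positivity), exp_log (by linarith)]
  ring

theorem partner_logRoot_le (hS : 0 < S) (hF : 4 * exp (-(a * S)) ≤ S ^ 2) :
    partner ha (logRoot a S) ≤ logRoot a S := by
  have hr := sqrt_nonneg (S ^ 2 - 4 * exp (-(a * S)))
  have hrS := sqrt_discr_lt (a := a) hS
  rw [partner_logRoot ha hS hF, logRoot]
  gcongr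
  linarith

end Roots

section Potential

/-- `q φ = log c₁ + g c₁ + z c₂`, rewritten with `log c₁ + log c₂ = -(g + z) (c₁ + c₂)`. -/
noncomputable def potential (g z q : ℝ) (ha : 0 ≤ g + z) (u : ℝ) : ℝ :=
  ((u - partner ha u) / 2 + (g - z) / 2 * concDiff ha u) / q

variable {g z q : ℝ} (ha : 0 ≤ g + z)

theorem potential_partner (u : ℝ) :
    potential g z q ha (partner ha u) = -potential g z q ha u := by
  rw [potential, potential, partner_partner, concDiff_partner]
  ring

theorem potential_eq_zero_of_partner_eq {u : ℝ} (hu : partner ha u = u) :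
    potential g z q ha u = 0 := by
  rw [potential, concDiff, hu]
  ring

theorem continuous_potential : Continuous (potential g z q ha) := by
  have := continuous_partner ha
  unfold potential concDiff
  fun_prop

theorem hasDerivAt_potential (u : ℝ) :
    HasDerivAt (potential g z q ha)
      ((1 + g * concSum ha u + (g ^ 2 - z ^ 2) * exp (-((g + z) * concSum ha u))) /
        (1 + (g + z) * exp (partner ha u)) / q) u := by
  refine ((((hasDerivAt_id u).sub (hasDerivAt_partner ha u)).div_const 2).add
    ((hasDerivAt_concDiff ha u).const_mul ((g - z) / 2))).div_const q |>.congr_deriv ?_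
  have hw : 0 < 1 + (g + z) * exp (partner ha u) := by positivity
  rw [← exp_mul_exp_partner, concSum]
  field_simp
  ring

theorem potential_strictMono (hzg : z ≤ g) (hq : 0 < q) :
    StrictMono (potential g z q ha) := by
  intro u w huw
  have h1 := partner_strictAnti ha huw
  have h2 := (concDiff_strictMono ha huw).le
  have hgz : 0 ≤ (g - z) / 2 := by linarith
  unfold potential
  gcongr ?_ / q
  nlinarith

theorem potential_nonneg_iff (hzg : z ≤ g) (hq : 0 < q) {u : ℝ} :
    0 ≤ potential g z q ha u ↔ partner ha u ≤ u := by
  have hgz : 0 ≤ (g - z) / 2 := by linarith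
  rw [potential, le_div_iff₀ hq, zero_mul]
  refine ⟨fun h => ?_, fun h => by nlinarith [(concDiff_nonneg_iff ha).2 h]⟩
  by_contra! hlt
  have : concDiff ha u < 0 := by rw [concDiff, sub_neg]; exact exp_lt_exp.2 hlt
  nlinarith

theorem potential_nonpos_iff (hzg : z ≤ g) (hq : 0 < q) {u : ℝ} :
    potential g z q ha u ≤ 0 ↔ u ≤ partner ha u := by
  rw [← neg_nonneg, ← potential_partner, potential_nonneg_iff ha hzg hq, partner_partner]

theorem tendsto_potential_atTop (hzg : z ≤ g) (hq : 0 < q) :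
    Tendsto (potential g z q ha) atTop atTop := by
  set C := (-partner ha 0 / 2 + (g - z) / 2 * concDiff ha 0) / q
  refine tendsto_atTop_mono' _ ?_
    (tendsto_atTop_add_const_right _ C ((tendsto_id.atTop_div_const two_pos).atTop_div_const hq))
  filter_upwards [eventually_ge_atTop 0] with u hu
  have h1 := (partner_strictAnti ha).antitone hu
  have h2 := (concDiff_strictMono ha).monotone hu
  have hgz : 0 ≤ (g - z) / 2 := by linarith
  rw [← sub_nonneg]
  have : potential g z q ha u - (id u / 2 / q + C)
      = ((partner ha 0 - partner ha u) / 2 + (g - z) / 2 * (concDiff ha u - concDiff ha 0)) / q :=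
        by
    simp only [potential, C, id]; ring
  rw [this]
  apply div_nonneg _ hq.le
  nlinarith

theorem tendsto_potential_atBot (hzg : z ≤ g) (hq : 0 < q) :
    Tendsto (potential g z q ha) atBot atBot := by
  refine (tendsto_neg_atTop_atBot.comp
    ((tendsto_potential_atTop ha hzg hq).comp (tendsto_partner_atBot ha))).congr fun u => ?_
  simp only [Function.comp_apply, potential_partner, neg_neg]

noncomputable def potentialIso (hzg : z ≤ g) (hq : 0 < q) : ℝ ≃o ℝ :=
  (potential_strictMono ha hzg hq).orderIsoOfSurjective _
    ((continuous_potential ha).surjective (tendsto_potential_atTop ha hzg hq)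
      (tendsto_potential_atBot ha hzg hq))

theorem potentialIso_apply (hzg : z ≤ g) (hq : 0 < q) (u : ℝ) :
    potentialIso ha hzg hq u = potential g z q ha u := rfl

end Potential

section CriticalSum

variable {g z : ℝ} (ha : 0 ≤ g + z)

theorem strictMono_sub_two_exp {a : ℝ} (ha : 0 ≤ a) :
    StrictMono fun S : ℝ => S - 2 * exp (-(a * S) / 2) :=
  strictMono_id.add_monotone fun S T h => by
    have : exp (-(a * T) / 2) ≤ exp (-(a * S) / 2) := exp_le_exp.2 (by nlinarith)
    linarith

theorem sigmaZ_eq_of (ha : 0 ≤ g + z) {S : ℝ} (hS : 0 < S)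
    (h : S = 2 * exp (-((g + z) * S) / 2)) : sigmaZ g z = S := by
  have hset : {S : ℝ | 0 < S ∧ S = 2 * exp (-((g + z) * S) / 2)} = {S} := by
    ext T
    refine ⟨fun hT => (strictMono_sub_two_exp ha).injective ?_, fun hT => hT ▸ ⟨hS, h⟩⟩
    linarith [hT.2]
  rw [sigmaZ, hset, csInf_singleton]

theorem concSum_eq_of_partner_eq {u : ℝ} (hu : partner ha u = u) :
    concSum ha u = 2 * exp (-((g + z) * concSum ha u) / 2) := by
  have h := add_partner ha u
  rw [concSum, hu] at h ⊢
  rw [show -((g + z) * (exp u + exp u)) / 2 = u by linarith]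
  ring

theorem sigmaZ_eq_concSum {u : ℝ} (hu : partner ha u = u) : sigmaZ g z = concSum ha u :=
  sigmaZ_eq_of ha (concSum_pos ha u) (concSum_eq_of_partner_eq ha hu)

theorem exists_partner_eq_self : ∃ u, partner ha u = u :=
  ⟨(psiIso ha).symm 0, (partner_eq_iff ha).2 (by
    rw [← psiIso_apply ha, OrderIso.apply_symm_apply, add_zero])⟩

theorem sigmaZ_pos (ha : 0 ≤ g + z) : 0 < sigmaZ g z := by
  obtain ⟨u, hu⟩ := exists_partner_eq_self ha
  rw [sigmaZ_eq_concSum ha hu]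
  exact concSum_pos ha u

theorem sigmaZ_le_iff (ha : 0 ≤ g + z) {S : ℝ} (hS : 0 < S) :
    sigmaZ g z ≤ S ↔ 4 * exp (-((g + z) * S)) ≤ S ^ 2 := by
  obtain ⟨u, hu⟩ := exists_partner_eq_self ha
  have hσ := concSum_eq_of_partner_eq ha hu
  rw [← sigmaZ_eq_concSum ha hu] at hσ
  have hsq : 4 * exp (-((g + z) * S)) = (2 * exp (-((g + z) * S) / 2)) ^ 2 := by
    rw [mul_pow, ← exp_nat_mul]; ring_nf
  rw [← (strictMono_sub_two_exp ha).le_iff_le, hsq,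
    pow_le_pow_iff_left₀ (by positivity) hS.le two_ne_zero]
  constructor <;> intro h <;> linarith

theorem sigmaZ_le_concSum (u : ℝ) : sigmaZ g z ≤ concSum ha u := by
  rw [sigmaZ_le_iff ha (concSum_pos ha u), ← sub_nonneg, sq_concSum_sub]
  positivity

end CriticalSum

section Branches

variable {g z : ℝ} (ha : 0 ≤ g + z) (q : ℝ)

theorem sqrt_discr_concSum_of_partner_le {u : ℝ} (hu : partner ha u ≤ u) :
    √(concSum ha u ^ 2 - 4 * exp (-((g + z) * concSum ha u))) = concDiff ha u := by
  rw [sq_concSum_sub, sqrt_sq ((concDiff_nonneg_iff ha).2 hu)]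

theorem sqrt_discr_concSum_of_le_partner {u : ℝ} (hu : u ≤ partner ha u) :
    √(concSum ha u ^ 2 - 4 * exp (-((g + z) * concSum ha u))) = -concDiff ha u := by
  rw [← concSum_partner, sqrt_discr_concSum_of_partner_le ha (by rwa [partner_partner]),
    concDiff_partner]

theorem phiA_concSum {u : ℝ} (hu : partner ha u ≤ u) :
    phiA g z q (concSum ha u) = potential g z q ha u := by
  rw [phiA, sqrt_discr_concSum_of_partner_le ha hu,
    show (concSum ha u + concDiff ha u) / 2 = exp u by rw [concSum, concDiff]; ring, log_exp,
    potential]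
  linear_combination add_partner ha u / 2 / q

theorem phiB_concSum {u : ℝ} (hu : u ≤ partner ha u) :
    phiB g z q (concSum ha u) = potential g z q ha u := by
  rw [phiB, sqrt_discr_concSum_of_le_partner ha hu,
    show (concSum ha u - -concDiff ha u) / 2 = exp u by rw [concSum, concDiff]; ring, log_exp,
    potential]
  linear_combination add_partner ha u / 2 / q

variable {S : ℝ}

theorem phiA_eq_potential (hS : sigmaZ g z ≤ S) :
    phiA g z q S = potential g z q ha (logRoot (g + z) S) := by
  have hS0 := (sigmaZ_pos ha).trans_le hS
  have hF := (sigmaZ_le_iff ha hS0).1 hS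
  conv_lhs => rw [← concSum_logRoot ha hS0 hF]
  exact phiA_concSum ha q (partner_logRoot_le ha hS0 hF)

theorem phiB_eq_potential (hS : sigmaZ g z ≤ S) :
    phiB g z q S = potential g z q ha (partner ha (logRoot (g + z) S)) := by
  have hS0 := (sigmaZ_pos ha).trans_le hS
  have hF := (sigmaZ_le_iff ha hS0).1 hS
  conv_lhs => rw [← concSum_logRoot ha hS0 hF, ← concSum_partner]
  refine phiB_concSum ha q ?_
  rw [partner_partner]
  exact partner_logRoot_le ha hS0 hF

end Branches

section Derivative

variable {g z q : ℝ}

noncomputable def diffRate (g z q S : ℝ) : ℝ :=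
  q * (S * exp ((g + z) * S) + 2 * (g + z)) / ((1 + g * S) * exp ((g + z) * S) + g ^ 2 - z ^ 2)

theorem diffRate_eq (g z q S : ℝ) :
    diffRate g z q S = q * (S + 2 * (g + z) * exp (-((g + z) * S))) /
      (1 + g * S + (g ^ 2 - z ^ 2) * exp (-((g + z) * S))) := by
  have hEP : exp ((g + z) * S) * exp (-((g + z) * S)) = 1 := by rw [← exp_add]; simp
  rw [diffRate, ← mul_div_mul_right _ _ (exp_pos (-((g + z) * S))).ne']
  congr 1
  · linear_combination q * S * hEP
  · linear_combination (1 + g * S) * hEP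

theorem diffRate_denom_pos (hz : 0 ≤ z) (hzg : z ≤ g) {S : ℝ} (hS : 0 ≤ S) :
    0 < 1 + g * S + (g ^ 2 - z ^ 2) * exp (-((g + z) * S)) := by
  have hg : 0 ≤ g := hz.trans hzg
  have hz2 : 0 ≤ g ^ 2 - z ^ 2 := sub_nonneg.2 (pow_le_pow_left₀ hz hzg 2)
  positivity

theorem diffRate_pos (hz : 0 ≤ z) (hzg : z ≤ g) (hq : 0 < q) {S : ℝ} (hS : 0 < S) :
    0 < diffRate g z q S := by
  have ha : 0 ≤ g + z := by linarith
  rw [diffRate_eq]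
  exact div_pos (by positivity) (diffRate_denom_pos hz hzg hS.le)

theorem hasDerivAt_concDiff_comp_potentialIso_symm (ha : 0 ≤ g + z) (hz : 0 ≤ z) (hzg : z ≤ g)
    (hq : 0 < q) (φ : ℝ) :
    HasDerivAt (concDiff ha ∘ (potentialIso ha hzg hq).symm)
      (diffRate g z q (concSum ha ((potentialIso ha hzg hq).symm φ))) φ := by
  set Φ := potentialIso ha hzg hq
  obtain ⟨u, rfl⟩ := Φ.surjective φ
  have hw : 0 < 1 + (g + z) * exp (partner ha u) := by positivity
  have hN := diffRate_denom_pos hz hzg (concSum_pos ha u).le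
  have hinv := HasDerivAt.of_local_left_inverse Φ.symm.continuous.continuousAt
    (by rw [Φ.symm_apply_apply]; exact hasDerivAt_potential ha u) (by positivity)
    (.of_forall Φ.apply_symm_apply)
  refine ((hasDerivAt_concDiff ha u).comp_of_eq _ hinv (Φ.symm_apply_apply u).symm).congr_deriv ?_
  rw [Φ.symm_apply_apply, diffRate_eq]
  field_simp

end Derivative

section Inverse

variable {g z q : ℝ}

theorem strictMonoOn_phiA (ha : 0 ≤ g + z) (hzg : z ≤ g) (hq : 0 < q) :
    StrictMonoOn (phiA g z q) (Ici (sigmaZ g z)) := by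
  intro S (hS : _ ≤ S) T (hT : _ ≤ T) hST
  rw [phiA_eq_potential ha q hS, phiA_eq_potential ha q hT]
  exact potential_strictMono ha hzg hq <| logRoot_strictMonoOn ha
    ((sigmaZ_pos ha).trans_le hS) ((sigmaZ_pos ha).trans_le hT) hST

theorem strictAntiOn_phiB (ha : 0 ≤ g + z) (hzg : z ≤ g) (hq : 0 < q) :
    StrictAntiOn (phiB g z q) (Ici (sigmaZ g z)) := by
  intro S (hS : _ ≤ S) T (hT : _ ≤ T) hST
  rw [phiB_eq_potential ha q hS, phiB_eq_potential ha q hT]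
  exact potential_strictMono ha hzg hq <| partner_strictAnti ha <| logRoot_strictMonoOn ha
    ((sigmaZ_pos ha).trans_le hS) ((sigmaZ_pos ha).trans_le hT) hST

theorem phiA_sigmaZ (ha : 0 ≤ g + z) : phiA g z q (sigmaZ g z) = 0 := by
  obtain ⟨u, hu⟩ := exists_partner_eq_self ha
  rw [sigmaZ_eq_concSum ha hu, phiA_concSum ha q hu.le, potential_eq_zero_of_partner_eq ha hu]

theorem phiB_sigmaZ (ha : 0 ≤ g + z) : phiB g z q (sigmaZ g z) = 0 := by
  obtain ⟨u, hu⟩ := exists_partner_eq_self ha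
  rw [sigmaZ_eq_concSum ha hu, phiB_concSum ha q hu.ge, potential_eq_zero_of_partner_eq ha hu]

theorem partner_potentialIso_symm_le (ha : 0 ≤ g + z) (hzg : z ≤ g) (hq : 0 < q) {φ : ℝ}
    (hφ : 0 ≤ φ) :
    partner ha ((potentialIso ha hzg hq).symm φ) ≤ (potentialIso ha hzg hq).symm φ := by
  rwa [← potential_nonneg_iff ha hzg hq, ← potentialIso_apply ha hzg hq, OrderIso.apply_symm_apply]

theorem potentialIso_symm_le_partner (ha : 0 ≤ g + z) (hzg : z ≤ g) (hq : 0 < q) {φ : ℝ}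
    (hφ : φ ≤ 0) :
    (potentialIso ha hzg hq).symm φ ≤ partner ha ((potentialIso ha hzg hq).symm φ) := by
  rwa [← potential_nonpos_iff ha hzg hq, ← potentialIso_apply ha hzg hq, OrderIso.apply_symm_apply]

theorem phiA_concSum_potentialIso_symm (ha : 0 ≤ g + z) (hzg : z ≤ g) (hq : 0 < q) {φ : ℝ}
    (hφ : 0 ≤ φ) : phiA g z q (concSum ha ((potentialIso ha hzg hq).symm φ)) = φ := by
  rw [phiA_concSum ha q (partner_potentialIso_symm_le ha hzg hq hφ), ← potentialIso_apply ha hzg hq,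
    OrderIso.apply_symm_apply]

theorem phiB_concSum_potentialIso_symm (ha : 0 ≤ g + z) (hzg : z ≤ g) (hq : 0 < q) {φ : ℝ}
    (hφ : φ ≤ 0) : phiB g z q (concSum ha ((potentialIso ha hzg hq).symm φ)) = φ := by
  rw [phiB_concSum ha q (potentialIso_symm_le_partner ha hzg hq hφ), ← potentialIso_apply ha hzg hq,
    OrderIso.apply_symm_apply]

theorem concSum_potentialIso_symm_zero (ha : 0 ≤ g + z) (hzg : z ≤ g) (hq : 0 < q) :
    concSum ha ((potentialIso ha hzg hq).symm 0) = sigmaZ g z := by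
  obtain ⟨u, hu⟩ := exists_partner_eq_self ha
  rw [(OrderIso.symm_apply_eq _).2 (potential_eq_zero_of_partner_eq ha hu).symm,
    sigmaZ_eq_concSum ha hu]

theorem bijOn_phiA (ha : 0 ≤ g + z) (hzg : z ≤ g) (hq : 0 < q) :
    BijOn (phiA g z q) (Ici (sigmaZ g z)) (Ici 0) := by
  refine ⟨fun S (hS : _ ≤ S) => ?_, (strictMonoOn_phiA ha hzg hq).injOn, fun φ (hφ : 0 ≤ φ) =>
    ⟨_, sigmaZ_le_concSum ha _, phiA_concSum_potentialIso_symm ha hzg hq hφ⟩⟩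
  have hS0 := (sigmaZ_pos ha).trans_le hS
  rw [mem_Ici, phiA_eq_potential ha q hS, potential_nonneg_iff ha hzg hq]
  exact partner_logRoot_le ha hS0 ((sigmaZ_le_iff ha hS0).1 hS)

theorem bijOn_phiB (ha : 0 ≤ g + z) (hzg : z ≤ g) (hq : 0 < q) :
    BijOn (phiB g z q) (Ici (sigmaZ g z)) (Iic 0) := by
  refine ⟨fun S (hS : _ ≤ S) => ?_, (strictAntiOn_phiB ha hzg hq).injOn, fun φ (hφ : φ ≤ 0) =>
    ⟨_, sigmaZ_le_concSum ha _, phiB_concSum_potentialIso_symm ha hzg hq hφ⟩⟩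
  have hS0 := (sigmaZ_pos ha).trans_le hS
  rw [mem_Iic, phiB_eq_potential ha q hS, potential_nonpos_iff ha hzg hq, partner_partner]
  exact partner_logRoot_le ha hS0 ((sigmaZ_le_iff ha hS0).1 hS)

theorem range_concSum_potentialIso_symm (ha : 0 ≤ g + z) (hzg : z ≤ g) (hq : 0 < q) :
    range (concSum ha ∘ (potentialIso ha hzg hq).symm) = Ici (sigmaZ g z) := by
  refine (range_subset_iff.2 fun φ => sigmaZ_le_concSum ha _).antisymm fun S (hS : _ ≤ S) => ?_
  have hS0 := (sigmaZ_pos ha).trans_le hS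
  refine ⟨potentialIso ha hzg hq (logRoot (g + z) S), ?_⟩
  simp only [OrderIso.symm_apply_apply]
  exact concSum_logRoot ha hS0 ((sigmaZ_le_iff ha hS0).1 hS)

end Inverse

end TwoSpecies

open TwoSpecies in
theorem stmt_4_general (g z q : ℝ) (hz : 0 < z) (hzg : z ≤ g) (hq : 1 ≤ q) :
    StrictMonoOn (phiA g z q) (Ici (sigmaZ g z)) ∧
    StrictAntiOn (phiB g z q) (Ici (sigmaZ g z)) ∧
    phiA g z q (sigmaZ g z) = 0 ∧ phiB g z q (sigmaZ g z) = 0 ∧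
    BijOn (phiA g z q) (Ici (sigmaZ g z)) (Ici 0) ∧
    BijOn (phiB g z q) (Ici (sigmaZ g z)) (Iic 0) ∧
    ∃ S : ℝ → ℝ,
      (∀ φ : ℝ, S φ ∈ Ici (sigmaZ g z)) ∧
      S 0 = sigmaZ g z ∧
      (∀ φ : ℝ, 0 ≤ φ → phiA g z q (S φ) = φ) ∧
      (∀ φ : ℝ, φ ≤ 0 → phiB g z q (S φ) = φ) ∧
      range S = Ici (sigmaZ g z) ∧
      ∀ D : ℝ → ℝ,
        (∀ φ : ℝ, 0 ≤ φ → D φ = Real.sqrt ((S φ) ^ 2 - 4 * Real.exp (-((g + z) * S φ)))) →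
        (∀ φ : ℝ, φ ≤ 0 → D φ = -Real.sqrt ((S φ) ^ 2 - 4 * Real.exp (-((g + z) * S φ)))) →
        StrictMono D ∧
        (∀ φ : ℝ,
          HasDerivAt D
            (q * (S φ * Real.exp ((g + z) * S φ) + 2 * (g + z)) /
              ((1 + g * S φ) * Real.exp ((g + z) * S φ) + g ^ 2 - z ^ 2)) φ ∧
          0 < q * (S φ * Real.exp ((g + z) * S φ) + 2 * (g + z)) /
              ((1 + g * S φ) * Real.exp ((g + z) * S φ) + g ^ 2 - z ^ 2)) ∧
        Tendsto D atTop atTop ∧ Tendsto D atBot atBot := by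
  have ha : 0 ≤ g + z := by linarith
  have hq₀ : 0 < q := by linarith
  set Φ := potentialIso ha hzg hq₀
  refine ⟨strictMonoOn_phiA ha hzg hq₀, strictAntiOn_phiB ha hzg hq₀, phiA_sigmaZ ha,
    phiB_sigmaZ ha, bijOn_phiA ha hzg hq₀, bijOn_phiB ha hzg hq₀, concSum ha ∘ Φ.symm,
    fun _ => sigmaZ_le_concSum ha _, concSum_potentialIso_symm_zero ha hzg hq₀,
    fun _ => phiA_concSum_potentialIso_symm ha hzg hq₀,
    fun _ => phiB_concSum_potentialIso_symm ha hzg hq₀,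
    range_concSum_potentialIso_symm ha hzg hq₀, fun D hD₁ hD₂ => ?_⟩
  obtain rfl : D = concDiff ha ∘ Φ.symm := funext fun φ => by
    rcases le_total 0 φ with hφ | hφ
    · rw [hD₁ φ hφ]
      exact sqrt_discr_concSum_of_partner_le ha (partner_potentialIso_symm_le ha hzg hq₀ hφ)
    · rw [hD₂ φ hφ, neg_eq_iff_eq_neg]
      exact sqrt_discr_concSum_of_le_partner ha (potentialIso_symm_le_partner ha hzg hq₀ hφ)
  exact ⟨(concDiff_strictMono ha).comp Φ.symm.strictMono,
    fun φ => ⟨hasDerivAt_concDiff_comp_potentialIso_symm ha hz.le hzg hq₀ φ,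
      diffRate_pos hz.le hzg hq₀ (concSum_pos ha _)⟩,
    (tendsto_concDiff_atTop ha).comp Φ.symm.tendsto_atTop,
    (tendsto_concDiff_atBot ha).comp Φ.symm.tendsto_atBot⟩

/-- for 0 < z ≤ g and q ≥ 1, φ_A is strictly increasing and φ_B strictly
decreasing on [Σ_z, ∞), both vanish at Σ_z, they map [Σ_z, ∞) bijectively onto [0,∞)
and (−∞,0] respectively; the single-valued inverse Σ(φ) exists on ℝ with range
[Σ_z, ∞) and Σ(0) = Σ_z, and the difference c₁ − c₂ as a function of φ is strictly
monotone increasing with the stated positive derivative and tends to ±∞ as φ → ±∞. -/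
theorem stmt_4 (g z q : ℝ) (hg : 0 < g) (hz : 0 < z) (hzg : z ≤ g) (hq : 1 ≤ q) :
    StrictMonoOn (phiA g z q) (Ici (sigmaZ g z)) ∧
    StrictAntiOn (phiB g z q) (Ici (sigmaZ g z)) ∧
    phiA g z q (sigmaZ g z) = 0 ∧ phiB g z q (sigmaZ g z) = 0 ∧
    BijOn (phiA g z q) (Ici (sigmaZ g z)) (Ici 0) ∧
    BijOn (phiB g z q) (Ici (sigmaZ g z)) (Iic 0) ∧
    ∃ S : ℝ → ℝ,
      (∀ φ : ℝ, S φ ∈ Ici (sigmaZ g z)) ∧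
      S 0 = sigmaZ g z ∧
      (∀ φ : ℝ, 0 ≤ φ → phiA g z q (S φ) = φ) ∧
      (∀ φ : ℝ, φ ≤ 0 → phiB g z q (S φ) = φ) ∧
      range S = Ici (sigmaZ g z) ∧
      ∀ D : ℝ → ℝ,
        (∀ φ : ℝ, 0 ≤ φ → D φ = Real.sqrt ((S φ) ^ 2 - 4 * Real.exp (-((g + z) * S φ)))) →
        (∀ φ : ℝ, φ ≤ 0 → D φ = -Real.sqrt ((S φ) ^ 2 - 4 * Real.exp (-((g + z) * S φ)))) →
        StrictMono D ∧
        (∀ φ : ℝ,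
          HasDerivAt D
            (q * (S φ * Real.exp ((g + z) * S φ) + 2 * (g + z)) /
              ((1 + g * S φ) * Real.exp ((g + z) * S φ) + g ^ 2 - z ^ 2)) φ ∧
          0 < q * (S φ * Real.exp ((g + z) * S φ) + 2 * (g + z)) /
              ((1 + g * S φ) * Real.exp ((g + z) * S φ) + g ^ 2 - z ^ 2)) ∧
        Tendsto D atTop atTop ∧ Tendsto D atBot atBot :=
  stmt_4_general g z q hz hzg hq
end

section
/- Fix g > 0 and suppose z₀ > √(1 + g²) satisfies f_{z₀}(Σ_{z₀}) = 0, where Σ_{z₀} > 0. Then Σ_{z₀} = 2/(z₀ − g), and the derivative of the map z ↦ f_z(Σ_z) at z = z₀ equals −(z₀ + g) < 0. -/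
/-!
Writing `u = 2 / Σ_z`, the defining equation of `Σ_z` becomes `u log u = g + z`, so `z ↦ 2 / Σ_z`
is the inverse of `u ↦ u log u - g` on `u > 1` and has derivative `1 / (log u + 1)`. Since then
`e^{(g+z)Σ_z} = u²`, we get `f_z(Σ_z) = (u + g)² - z²`. A zero at `z₀` forces `u = z₀ - g`, hence
`log u + 1 = 2 z₀ / u`, and the chain rule gives the derivative `2 z₀ u / (2 z₀) - 2 z₀ = -(z₀ + g)`.
-/

open Real Filter Topology Set

/-- f_z(Σ) = (1 + gΣ)·e^{(g+z)Σ} + g² − z². -/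
noncomputable def fz (g z S : ℝ) : ℝ :=
  (1 + g * S) * Real.exp ((g + z) * S) + g ^ 2 - z ^ 2

theorem StrictMonoOn.continuousAt_of_local_left_inverse {f u : ℝ → ℝ} {t : Set ℝ} {x : ℝ}
    (hf : StrictMonoOn f t) (ht : t ∈ 𝓝 (u x)) (hfc : ContinuousAt f (u x))
    (hu : ∀ᶠ y in 𝓝 x, u y ∈ t ∧ f (u y) = y) : ContinuousAt u x := by
  set s := {y | u y ∈ t ∧ f (u y) = y}
  have hxs : x ∈ s := mem_of_mem_nhds hu
  have hmono : MonotoneOn u s := fun y₁ h₁ y₂ h₂ hle =>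
    (hf.le_iff_le h₁.1 h₂.1).mp (by rw [h₁.2, h₂.2]; exact hle)
  have himage : t ∩ f ⁻¹' s ⊆ u '' s := fun v ⟨hvt, hvs⟩ =>
    ⟨f v, hvs, hf.injOn hvs.1 hvt hvs.2⟩
  refine continuousAt_of_monotoneOn_of_image_mem_nhds hmono hu (mem_of_superset ?_ himage)
  exact inter_mem ht (hfc.preimage_mem_nhds (by rw [hxs.2]; exact hu))

theorem StrictMonoOn.hasDerivAt_of_local_left_inverse {f u : ℝ → ℝ} {t : Set ℝ} {f' x : ℝ}
    (hf : StrictMonoOn f t) (ht : t ∈ 𝓝 (u x)) (hfd : HasDerivAt f f' (u x)) (hf' : f' ≠ 0)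
    (hu : ∀ᶠ y in 𝓝 x, u y ∈ t ∧ f (u y) = y) : HasDerivAt u f'⁻¹ x :=
  hfd.of_local_left_inverse (hf.continuousAt_of_local_left_inverse ht hfd.continuousAt hu) hf'
    (hu.mono fun _ h => h.2)

theorem exists_one_lt_mul_log_eq {c : ℝ} (hc : 0 < c) : ∃ u, 1 < u ∧ u * log u = c := by
  have hc_mem : c ∈ Icc (1 * log 1) (exp c * log (exp c)) :=
    ⟨by simpa using hc.le, by simpa using le_mul_of_one_le_left hc.le (one_le_exp hc.le)⟩
  obtain ⟨u, ⟨hu1, -⟩, hu⟩ :=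
    intermediate_value_Icc (one_le_exp hc.le) continuous_mul_log.continuousOn hc_mem
  refine ⟨u, lt_of_le_of_ne hu1 ?_, hu⟩
  rintro rfl
  simp [hc.ne] at hu

theorem strictMonoOn_mul_log_Ioi_one : StrictMonoOn (fun x => x * log x) (Ioi 1) :=
  mul_log_strictMonoOn.mono fun x hx =>
    mem_Ici.mpr (by linarith [exp_neg_one_lt_half, mem_Ioi.mp hx])

theorem eq_two_mul_exp_iff_mul_log {c S : ℝ} (hS : 0 < S) :
    S = 2 * exp (-(c * S) / 2) ↔ 2 / S * log (2 / S) = c := by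
  have h2S : 0 < 2 / S := by positivity
  calc S = 2 * exp (-(c * S) / 2) ↔ exp (c * S / 2) = 2 / S := by
        rw [eq_div_iff hS.ne', neg_div, exp_neg]
        constructor <;> intro h <;> field_simp at h ⊢ <;> linarith
    _ ↔ c * S / 2 = log (2 / S) :=
        ⟨fun h => by rw [← h, log_exp], fun h => by rw [h, exp_log h2S]⟩
    _ ↔ 2 / S * log (2 / S) = c := by
        constructor <;> intro h <;> field_simp at h ⊢ <;> linarith

theorem sigmaZ_eq_two_div {g z u : ℝ} (hu : 1 < u) (h : u * log u = g + z) :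
    sigmaZ g z = 2 / u := by
  suffices {S : ℝ | 0 < S ∧ S = 2 * exp (-((g + z) * S) / 2)} = {2 / u} by
    rw [sigmaZ, this, csInf_singleton]
  ext S
  simp only [mem_ofPred_eq, mem_singleton_iff]
  constructor
  · rintro ⟨hS, hSeq⟩
    rw [eq_two_mul_exp_iff_mul_log hS, ← h] at hSeq
    have hv : 1 < 2 / S := by
      by_contra! hle
      have := mul_log_nonpos (by positivity) hle
      linarith [mul_log_pos hu]
    rw [← strictMonoOn_mul_log_Ioi_one.injOn hv hu hSeq, div_div_cancel₀ two_ne_zero]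
  · rintro rfl
    have hu0 : 0 < u := by linarith
    refine ⟨by positivity, (eq_two_mul_exp_iff_mul_log (by positivity)).mpr ?_⟩
    rwa [div_div_cancel₀ two_ne_zero]

theorem one_lt_two_div_sigmaZ_and_mul_log {g z : ℝ} (hz : 0 < g + z) :
    1 < 2 / sigmaZ g z ∧ 2 / sigmaZ g z * log (2 / sigmaZ g z) = g + z := by
  obtain ⟨u, hu, h⟩ := exists_one_lt_mul_log_eq hz
  rw [sigmaZ_eq_two_div hu h, div_div_cancel₀ two_ne_zero]
  exact ⟨hu, h⟩

theorem fz_two_div {g z u : ℝ} (hu : 0 < u) (h : u * log u = g + z) :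
    fz g z (2 / u) = (u + g) ^ 2 - z ^ 2 := by
  have hexp : exp ((g + z) * (2 / u)) = u ^ 2 := by
    rw [← h, show u * log u * (2 / u) = log (u ^ 2) by rw [log_pow]; field_simp; push_cast; ring,
      exp_log (by positivity)]
  rw [fz, hexp]
  field_simp
  ring

theorem fz_sigmaZ {g z : ℝ} (hz : 0 < g + z) :
    fz g z (sigmaZ g z) = (2 / sigmaZ g z + g) ^ 2 - z ^ 2 := by
  obtain ⟨u, hu, h⟩ := exists_one_lt_mul_log_eq hz
  rw [sigmaZ_eq_two_div hu h, fz_two_div (by linarith) h, div_div_cancel₀ two_ne_zero]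

theorem hasDerivAt_two_div_sigmaZ {g z : ℝ} (hz : 0 < g + z) :
    HasDerivAt (fun y => 2 / sigmaZ g y) (log (2 / sigmaZ g z) + 1)⁻¹ z := by
  obtain ⟨hu, -⟩ := one_lt_two_div_sigmaZ_and_mul_log hz
  have hmono : StrictMonoOn (fun v => v * log v - g) (Ioi 1) := fun a ha b hb hab =>
    sub_lt_sub_right (strictMonoOn_mul_log_Ioi_one ha hb hab) g
  refine hmono.hasDerivAt_of_local_left_inverse (Ioi_mem_nhds hu)
    ((hasDerivAt_mul_log (by linarith)).sub_const g) (by linarith [log_pos hu]) ?_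
  filter_upwards [eventually_gt_nhds (show -g < z by linarith)] with y hy
  obtain ⟨hyu, hy⟩ := one_lt_two_div_sigmaZ_and_mul_log (show 0 < g + y by linarith)
  exact ⟨hyu, by simp only [hy]; ring⟩

theorem stmt_6_general (g z₀ : ℝ) (hz₀ : Real.sqrt (1 + g ^ 2) < z₀)
    (hzero : fz g z₀ (sigmaZ g z₀) = 0) :
    sigmaZ g z₀ = 2 / (z₀ - g) ∧
    HasDerivAt (fun z => fz g z (sigmaZ g z)) (-(z₀ + g)) z₀ ∧
    -(z₀ + g) < 0 := by
  have habs : |g| < z₀ := lt_trans ((lt_sqrt (abs_nonneg g)).mpr (by simp)) hz₀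
  have hgz : 0 < g + z₀ := by linarith [neg_abs_le g]
  obtain ⟨u, hu, hlog⟩ := exists_one_lt_mul_log_eq hgz
  have hσ : sigmaZ g z₀ = 2 / u := sigmaZ_eq_two_div hu hlog
  have hug : u + g = z₀ := by
    rw [hσ, fz_two_div (by linarith) hlog, sub_eq_zero, sq_eq_sq_iff_eq_or_eq_neg] at hzero
    exact hzero.resolve_right fun h => by linarith
  refine ⟨by rw [hσ, ← hug, add_sub_cancel_right], ?_, by linarith⟩
  have hF : (fun z => fz g z (sigmaZ g z)) =ᶠ[𝓝 z₀]
      fun z => (2 / sigmaZ g z + g) ^ 2 - z ^ 2 := by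
    filter_upwards [eventually_gt_nhds (show -g < z₀ by linarith)] with y hy
    exact fz_sigmaZ (by linarith)
  have hd := (((hasDerivAt_two_div_sigmaZ hgz).add_const g).fun_pow 2).fun_sub
    (hasDerivAt_pow 2 z₀)
  rw [hσ, div_div_cancel₀ two_ne_zero, hug] at hd
  refine (hd.congr_of_eventuallyEq hF).congr_deriv ?_
  have hlog1 : log u + 1 = 2 * z₀ / u := by
    field_simp
    linarith
  have hz0 : z₀ ≠ 0 := (lt_of_le_of_lt (abs_nonneg g) habs).ne'
  rw [hlog1]
  field_simp
  rw [← hug]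
  push_cast
  ring

/-- if z₀ > √(1+g²) satisfies f_{z₀}(Σ_{z₀}) = 0 with Σ_{z₀} > 0, then
Σ_{z₀} = 2/(z₀ − g) and the derivative of z ↦ f_z(Σ_z) at z₀ equals −(z₀ + g) < 0. -/
theorem stmt_6 (g z₀ : ℝ) (hg : 0 < g) (hz₀ : Real.sqrt (1 + g ^ 2) < z₀)
    (hpos : 0 < sigmaZ g z₀) (hzero : fz g z₀ (sigmaZ g z₀) = 0) :
    sigmaZ g z₀ = 2 / (z₀ - g) ∧
    HasDerivAt (fun z => fz g z (sigmaZ g z)) (-(z₀ + g)) z₀ ∧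
    -(z₀ + g) < 0 :=
  stmt_6_general g z₀ hz₀ hzero
end

section
/- Fix g > 0. The map z ↦ Σ_z is differentiable on (0, ∞) with dΣ_z/dz = −Σ_z² / ((g+z)Σ_z + 2) < 0; in particular z ↦ Σ_z is strictly decreasing, and Σ_z → 0 as z → ∞. -/
/-!
For `a = g + z ≥ 0` the map `S ↦ S - 2·e^{-aS/2}` is strictly increasing and changes sign on
`[0, 2]`, so the fixed-point equation has exactly one root and the `sInf` defining `Σ_z` is that
root. Solving the equation for `z` gives an explicit inverse `z = 2 log(2/Σ)/Σ - g` near every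
`Σ_z`, with derivative `-(2 + (g + z)Σ)/Σ² ≠ 0`; the inverse function theorem yields the
derivative of `z ↦ Σ_z`, and its sign the monotonicity. Finally
`2/Σ = e^{(g+z)Σ/2} ≥ 1 + (g+z)Σ/2` gives `Σ_z² < 4/(g+z)`.
-/

open Real Filter Topology Set

lemma strictMono_sub_two_mul_exp {a : ℝ} (ha : 0 ≤ a) :
    StrictMono fun S : ℝ => S - 2 * exp (-(a * S) / 2) := by
  intro S T hST
  have : exp (-(a * T) / 2) ≤ exp (-(a * S) / 2) := by gcongr
  dsimp only
  linarith

lemma existsUnique_eq_two_mul_exp {a : ℝ} (ha : 0 ≤ a) :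
    ∃! S : ℝ, S = 2 * exp (-(a * S) / 2) := by
  have hF : Continuous fun S : ℝ => S - 2 * exp (-(a * S) / 2) := by fun_prop
  have h0 : 0 - 2 * exp (-(a * 0) / 2) ≤ 0 := by simp
  have h2 : 0 ≤ 2 - 2 * exp (-(a * 2) / 2) := by
    have : exp (-(a * 2) / 2) ≤ 1 := exp_le_one_iff.2 (by linarith)
    linarith
  obtain ⟨S, -, hS⟩ := intermediate_value_Icc zero_le_two hF.continuousOn ⟨h0, h2⟩
  refine ⟨S, sub_eq_zero.1 hS, fun T hT => (strictMono_sub_two_mul_exp ha).injective ?_⟩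
  simp only [← hT, ← sub_eq_zero.1 hS, sub_self]

variable {g z S : ℝ}

lemma sigmaZ_eq_of_eq (h : 0 ≤ g + z) (hS : S = 2 * exp (-((g + z) * S) / 2)) :
    sigmaZ g z = S := by
  have hset : {T : ℝ | 0 < T ∧ T = 2 * exp (-((g + z) * T) / 2)} = {S} := by
    ext T
    refine ⟨fun hT => (existsUnique_eq_two_mul_exp h).unique hT.2 hS, ?_⟩
    rintro rfl
    exact ⟨hS ▸ by positivity, hS⟩
  rw [sigmaZ, hset, csInf_singleton]

lemma sigmaZ_eq (h : 0 ≤ g + z) : sigmaZ g z = 2 * exp (-((g + z) * sigmaZ g z) / 2) := by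
  obtain ⟨S, hS, -⟩ := existsUnique_eq_two_mul_exp h
  rwa [sigmaZ_eq_of_eq h hS]

lemma sigmaZ_pos (h : 0 ≤ g + z) : 0 < sigmaZ g z := by
  rw [sigmaZ_eq h]; positivity

lemma sigmaZ_lt_two (h : 0 < g + z) : sigmaZ g z < 2 := by
  have : exp (-((g + z) * sigmaZ g z) / 2) < 1 :=
    exp_lt_one_iff.2 (by have := mul_pos h (sigmaZ_pos h.le); linarith)
  rw [sigmaZ_eq h.le]
  linarith

lemma sigmaZ_sq_mul_lt (h : 0 < g + z) : sigmaZ g z ^ 2 * (g + z) < 4 := by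
  have hS := sigmaZ_pos h.le
  have h2 : sigmaZ g z * exp ((g + z) * sigmaZ g z / 2) = 2 := by
    conv_lhs => arg 1; rw [sigmaZ_eq h.le]
    rw [mul_assoc, ← exp_add, neg_div, neg_add_cancel, exp_zero, mul_one]
  nlinarith [add_one_le_exp ((g + z) * sigmaZ g z / 2)]

/-- The `z` with `Σ_z = S`, solved from `S = 2·e^{−(g+z)S/2}` (for `0 < S ≤ 2`). -/
noncomputable def sigmaZInv (g S : ℝ) : ℝ := 2 * (log 2 - log S) / S - g

lemma add_sigmaZInv : g + sigmaZInv g S = 2 * (log 2 - log S) / S := by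
  rw [sigmaZInv]; ring

lemma sigmaZ_sigmaZInv (h0 : 0 < S) (h2 : S ≤ 2) : sigmaZ g (sigmaZInv g S) = S := by
  have hlog : log S ≤ log 2 := log_le_log h0 h2
  apply sigmaZ_eq_of_eq
  · rw [add_sigmaZInv]; have := sub_nonneg.2 hlog; positivity
  · rw [add_sigmaZInv, div_mul_cancel₀ _ h0.ne',
      show -(2 * (log 2 - log S)) / 2 = log S - log 2 by ring, exp_sub, exp_log h0, exp_log two_pos]
    ring

lemma sigmaZInv_sigmaZ (h : 0 < g + z) : sigmaZInv g (sigmaZ g z) = z := by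
  have hS := sigmaZ_pos h.le
  have hlog : log (sigmaZ g z) = log 2 - (g + z) * sigmaZ g z / 2 := by
    conv_lhs => rw [sigmaZ_eq h.le]
    rw [log_mul two_ne_zero (exp_ne_zero _), log_exp]; ring
  rw [sigmaZInv, hlog]
  field_simp
  ring

lemma hasStrictDerivAt_sigmaZInv (hS : S ≠ 0) :
    HasStrictDerivAt (sigmaZInv g) (-(2 + (g + sigmaZInv g S) * S) / S ^ 2) S := by
  have hnum : HasStrictDerivAt (fun T => 2 * (log 2 - log T)) (2 * (0 - S⁻¹)) S :=
    ((hasStrictDerivAt_const S (log 2)).sub (hasStrictDerivAt_log hS)).const_mul 2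
  refine HasStrictDerivAt.congr_deriv (f := sigmaZInv g)
    ((hnum.fun_div (hasStrictDerivAt_id S) hS).sub_const g) ?_
  rw [add_sigmaZInv, id]
  field_simp
  ring

theorem hasStrictDerivAt_sigmaZ (h : 0 < g + z) :
    HasStrictDerivAt (sigmaZ g) (-sigmaZ g z ^ 2 / ((g + z) * sigmaZ g z + 2)) z := by
  set S := sigmaZ g z
  have hS : 0 < S := sigmaZ_pos h.le
  have hd : -(2 + (g + sigmaZInv g S) * S) / S ^ 2 ≠ 0 := by
    rw [sigmaZInv_sigmaZ h]
    have := mul_pos h hS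
    exact div_ne_zero (by linarith) (by positivity)
  have hleft : ∀ᶠ T in 𝓝 S, sigmaZ g (sigmaZInv g T) = T := by
    filter_upwards [Ioo_mem_nhds hS (sigmaZ_lt_two h)] with T hT
    exact sigmaZ_sigmaZInv hT.1 hT.2.le
  have key := (hasStrictDerivAt_sigmaZInv hS.ne').to_local_left_inverse hd hleft
  rw [sigmaZInv_sigmaZ h] at key
  refine key.congr_deriv ?_
  rw [inv_div, div_neg, neg_div, add_comm]

lemma neg_sq_sigmaZ_div_neg (h : 0 ≤ g + z) :
    -sigmaZ g z ^ 2 / ((g + z) * sigmaZ g z + 2) < 0 := by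
  have hS := sigmaZ_pos h
  exact div_neg_of_neg_of_pos (by nlinarith) (by nlinarith)

theorem strictAntiOn_sigmaZ (g : ℝ) : StrictAntiOn (sigmaZ g) (Ioi (-g)) := by
  have hgz : ∀ z ∈ Ioi (-g), 0 < g + z := fun z hz => by rw [mem_Ioi] at hz; linarith
  refine strictAntiOn_of_hasDerivWithinAt_neg
    (f' := fun z => -sigmaZ g z ^ 2 / ((g + z) * sigmaZ g z + 2)) (convex_Ioi _)
    (fun z hz => (hasStrictDerivAt_sigmaZ (hgz z hz)).hasDerivAt.continuousAt.continuousWithinAt)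
    (fun z hz => ?_) (fun z hz => ?_)
  all_goals rw [interior_Ioi] at hz
  · exact (hasStrictDerivAt_sigmaZ (hgz z hz)).hasDerivAt.hasDerivWithinAt
  · exact neg_sq_sigmaZ_div_neg (hgz z hz).le

theorem tendsto_sigmaZ_atTop (g : ℝ) : Tendsto (sigmaZ g) atTop (𝓝 0) := by
  have hsq : Tendsto (fun z => sigmaZ g z ^ 2) atTop (𝓝 0) := by
    have hbound : Tendsto (fun z => 4 / (g + z)) atTop (𝓝 0) :=
      tendsto_const_nhds.div_atTop (tendsto_atTop_add_const_left _ g tendsto_id)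
    refine tendsto_of_tendsto_of_tendsto_of_le_of_le' tendsto_const_nhds hbound
      (Eventually.of_forall fun z => sq_nonneg _) ?_
    filter_upwards [eventually_gt_atTop (-g)] with z hz
    have h : 0 < g + z := by linarith
    rw [le_div_iff₀ h]
    exact (sigmaZ_sq_mul_lt h).le
  have hsqrt := hsq.sqrt
  rw [sqrt_zero] at hsqrt
  refine hsqrt.congr' ?_
  filter_upwards [eventually_ge_atTop (-g)] with z hz
  exact sqrt_sq (sigmaZ_pos (by linarith)).le

/-- z ↦ Σ_z is differentiable on (0,∞) with
dΣ_z/dz = −Σ_z²/((g+z)Σ_z + 2) < 0; in particular it is strictly decreasing,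
and Σ_z → 0 as z → ∞. -/
theorem stmt_7 (g : ℝ) (hg : 0 < g) :
    (∀ z : ℝ, 0 < z →
      HasDerivAt (fun w => sigmaZ g w) (-(sigmaZ g z) ^ 2 / ((g + z) * sigmaZ g z + 2)) z ∧
      -(sigmaZ g z) ^ 2 / ((g + z) * sigmaZ g z + 2) < 0) ∧
    StrictAntiOn (fun z => sigmaZ g z) (Set.Ioi 0) ∧
    Filter.Tendsto (fun z => sigmaZ g z) Filter.atTop (nhds 0) := by
  refine ⟨fun z hz => ?_, (strictAntiOn_sigmaZ g).mono (Ioi_subset_Ioi (by linarith)),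
    tendsto_sigmaZ_atTop g⟩
  have h : 0 < g + z := by linarith
  exact ⟨(hasStrictDerivAt_sigmaZ h).hasDerivAt, neg_sq_sigmaZ_div_neg h.le⟩
end

section
/- Fix g > 0. Then f_z(Σ_z) = [4(1 + gΣ_z) − 2gΣ_z(2 ln Σ_z − ln 4) − (2 ln Σ_z − ln 4)²] / Σ_z², and f_z(Σ_z) → −∞ as z → ∞. In particular, f_z(Σ_z) < 0 for all sufficiently large z, and for such z the unique positive zero Σ_{c,z} of f_z satisfies Σ_{c,z} > Σ_z. -/
lemma sig_exists_unique (a : ℝ) (ha : 0 < a) :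
    ∃! S : ℝ, 0 < S ∧ S = 2 * Real.exp (-(a * S) / 2) := by
  have hcont : ContinuousOn (fun S : ℝ => S - 2 * Real.exp (-(a * S) / 2)) (Set.Icc 0 2) := by
    fun_prop
  have h0 : (fun S : ℝ => S - 2 * Real.exp (-(a * S) / 2)) 0 = -2 := by simp
  have h2 : 0 ≤ (fun S : ℝ => S - 2 * Real.exp (-(a * S) / 2)) 2 := by
    simp only
    have : Real.exp (-(a * 2) / 2) ≤ 1 := by
      rw [Real.exp_le_one_iff]; nlinarith
    nlinarith
  have := intermediate_value_Icc (by norm_num : (0:ℝ) ≤ 2) hcont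
  have hmem : (0:ℝ) ∈ Set.Icc ((fun S : ℝ => S - 2 * Real.exp (-(a * S) / 2)) 0)
      ((fun S : ℝ => S - 2 * Real.exp (-(a * S) / 2)) 2) := by
    rw [Set.mem_Icc, h0]; exact ⟨by norm_num, h2⟩
  obtain ⟨S, hSmem, hSeq⟩ := this hmem
  have heq : S = 2 * Real.exp (-(a * S) / 2) := by
    have := hSeq; simp only at this; linarith
  refine ⟨S, ⟨by rw [heq]; positivity, heq⟩, ?_⟩
  rintro T ⟨hT, hTeq⟩
  have hS : 0 < S := by rw [heq]; positivity
  by_contra hne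
  rcases lt_or_gt_of_ne hne with h | h
  · have : Real.exp (-(a * S) / 2) < Real.exp (-(a * T) / 2) := by
      apply Real.exp_lt_exp.mpr; nlinarith
    nlinarith
  · have : Real.exp (-(a * T) / 2) < Real.exp (-(a * S) / 2) := by
      apply Real.exp_lt_exp.mpr; nlinarith
    nlinarith

lemma sigmaZ_spec (g z : ℝ) (ha : 0 < g + z) :
    0 < sigmaZ g z ∧ sigmaZ g z = 2 * Real.exp (-((g + z) * sigmaZ g z) / 2) := by
  obtain ⟨S, hS, huniq⟩ := sig_exists_unique (g + z) ha
  have hset : {T : ℝ | 0 < T ∧ T = 2 * Real.exp (-((g + z) * T) / 2)} = {S} := by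
    ext T
    simp only [Set.mem_setOf_eq, Set.mem_singleton_iff]
    exact ⟨fun h => huniq T h, fun h => h ▸ hS⟩
  have : sigmaZ g z = S := by rw [sigmaZ, hset, csInf_singleton]
  rw [this]; exact hS

lemma sigmaZ_facts (g z : ℝ) (ha : 0 < g + z) :
    0 < sigmaZ g z ∧ sigmaZ g z ≤ 2 ∧
    Real.exp ((g + z) * sigmaZ g z) = 4 / (sigmaZ g z) ^ 2 ∧
    (g + z) * sigmaZ g z = Real.log 4 - 2 * Real.log (sigmaZ g z) := by
  obtain ⟨hS, heq⟩ := sigmaZ_spec g z ha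
  set S := sigmaZ g z with hSdef
  have hSle : S ≤ 2 := by
    rw [heq]
    have : Real.exp (-((g + z) * S) / 2) ≤ 1 := by
      rw [Real.exp_le_one_iff]; nlinarith
    linarith
  have hsq : S ^ 2 = 4 * Real.exp (-((g + z) * S)) := by
    nth_rewrite 1 [heq]
    rw [mul_pow, pow_two, pow_two, ← Real.exp_add]
    ring_nf
  have hexp : Real.exp ((g + z) * S) = 4 / S ^ 2 := by
    rw [hsq, Real.exp_neg]
    field_simp
  have hlog : (g + z) * S = Real.log 4 - 2 * Real.log S := by
    have := congrArg Real.log hexp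
    rw [Real.log_exp, Real.log_div (by norm_num) (by positivity),
      Real.log_pow] at this
    push_cast at this
    linarith
  exact ⟨hS, hSle, hexp, hlog⟩

lemma fz_identity (g z : ℝ) (ha : 0 < g + z) :
    fz g z (sigmaZ g z) =
      (4 * (1 + g * sigmaZ g z)
        - 2 * g * sigmaZ g z * (2 * Real.log (sigmaZ g z) - Real.log 4)
        - (2 * Real.log (sigmaZ g z) - Real.log 4) ^ 2) / (sigmaZ g z) ^ 2 := by
  obtain ⟨hS, hSle, hexp, hlog⟩ := sigmaZ_facts g z ha
  set S := sigmaZ g z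
  set L := Real.log S
  set M := Real.log 4
  have hzS : z * S = M - 2 * L - g * S := by nlinarith [hlog]
  rw [fz, hexp]
  have hS0 : S ≠ 0 := ne_of_gt hS
  field_simp
  linear_combination (-(z*S) - (M - 2*L - g*S)) * hzS

set_option maxHeartbeats 1000000 in
lemma fz_bound (g z : ℝ) (hg : 0 < g)
    (h1 : Real.exp (Real.sqrt (8 * (1 + 2 * g))) ≤ g + z) (h2 : 8 * g ≤ g + z) :
    fz g z (sigmaZ g z) ≤ -(g + z) ^ 2 / 4 := by
  set a := g + z with hadef
  clear_value a
  have ha : 0 < a := by nlinarith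
  obtain ⟨hS, hSle, hexp, hlog⟩ := sigmaZ_facts g z (hadef ▸ ha)
  set S := sigmaZ g z with hSdef
  clear_value S
  rw [← hadef] at hexp hlog
  -- log a is large
  have hla : Real.sqrt (8 * (1 + 2 * g)) ≤ Real.log a :=
    (Real.le_log_iff_exp_le ha).mpr h1
  have hsq8 : (8 : ℝ) * (1 + 2 * g) ≤ (Real.log a) ^ 2 := by
    have h8 : (0:ℝ) ≤ 8 * (1 + 2 * g) := by nlinarith
    nlinarith [Real.sq_sqrt h8, Real.sqrt_nonneg (8 * (1 + 2 * g))]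
  have hla0 : 0 < Real.log a :=
    lt_of_lt_of_le (Real.sqrt_pos.mpr (by nlinarith)) hla
  -- a * S^2 ≤ 4
  have hexp_ge : ((a * S) / 2) ^ 2 ≤ Real.exp (a * S) := by
    have h := Real.add_one_le_exp ((a * S) / 2)
    have h2' : Real.exp ((a * S) / 2) ^ 2 = Real.exp (a * S) := by
      rw [pow_two, ← Real.exp_add]; ring_nf
    have hx0 : (0:ℝ) ≤ a * S / 2 := by positivity
    calc (a * S / 2) ^ 2 ≤ Real.exp (a * S / 2) ^ 2 :=
          pow_le_pow_left₀ hx0 (by linarith) 2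
      _ = Real.exp (a * S) := h2'
  have haS2 : a * S ^ 2 ≤ 4 := by
    have h4 : (a * S / 2) ^ 2 ≤ 4 / S ^ 2 := by rw [← hexp]; exact hexp_ge
    have hS2 : (0:ℝ) < S ^ 2 := by positivity
    have h4' : (a * S / 2) ^ 2 * S ^ 2 ≤ 4 := by
      have h5 := mul_le_mul_of_nonneg_right h4 (le_of_lt hS2)
      rwa [div_mul_cancel₀ _ (ne_of_gt hS2)] at h5
    nlinarith [h4', mul_pos ha hS2]
  -- log a ≤ a * S
  have hlogaS : Real.log a ≤ a * S := by
    have hle : a ≤ 4 / S ^ 2 := by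
      rw [le_div_iff₀ (by positivity)]; nlinarith
    have := Real.log_le_log ha hle
    rw [← hexp, Real.log_exp] at this
    exact this
  -- 4 / S^2 ≤ 4 a^2 / (log a)^2
  have h4S : 4 / S ^ 2 ≤ 4 * a ^ 2 / (Real.log a) ^ 2 := by
    rw [div_le_div_iff₀ (by positivity) (by positivity)]
    nlinarith [mul_pos ha hS]
  have hzval : g ^ 2 - z ^ 2 = 2 * a * g - a ^ 2 := by rw [hadef]; ring
  have hmain : fz g z S ≤ (1 + 2 * g) * (4 * a ^ 2 / (Real.log a) ^ 2) + 2 * a * g - a ^ 2 := by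
    rw [fz, ← hadef, hexp]
    have h1g : 1 + g * S ≤ 1 + 2 * g := by nlinarith
    have hp : (0:ℝ) < 4 / S ^ 2 := by positivity
    have hmul : (1 + g * S) * (4 / S ^ 2) ≤ (1 + 2 * g) * (4 * a ^ 2 / (Real.log a) ^ 2) :=
      mul_le_mul h1g h4S (le_of_lt hp) (by nlinarith)
    linarith [hzval]
  have hterm1 : (1 + 2 * g) * (4 * a ^ 2 / (Real.log a) ^ 2) ≤ a ^ 2 / 2 := by
    have heq2 : (1 + 2 * g) * (4 * a ^ 2 / (Real.log a) ^ 2)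
        = (4 * (1 + 2 * g) * a ^ 2) / (Real.log a) ^ 2 := by ring
    rw [heq2, div_le_div_iff₀ (by positivity) (by norm_num : (0:ℝ) < 2)]
    nlinarith [mul_le_mul_of_nonneg_left hsq8 (sq_nonneg a)]
  have hterm2 : 2 * a * g ≤ a ^ 2 / 4 := by nlinarith [mul_le_mul_of_nonneg_left h2 (le_of_lt ha)]
  calc fz g z S ≤ (1 + 2 * g) * (4 * a ^ 2 / (Real.log a) ^ 2) + 2 * a * g - a ^ 2 := hmain
    _ ≤ a ^ 2 / 2 + a ^ 2 / 4 - a ^ 2 := by linarith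
    _ = -a ^ 2 / 4 := by ring

lemma fz_mono (g z : ℝ) (hg : 0 < g) (ha : 0 < g + z) {S T : ℝ} (hS : 0 < S) (hST : S ≤ T) :
    fz g z S ≤ fz g z T := by
  rw [fz, fz]
  have h1 : 1 + g * S ≤ 1 + g * T := by nlinarith
  have h2 : Real.exp ((g + z) * S) ≤ Real.exp ((g + z) * T) :=
    Real.exp_le_exp.mpr (by nlinarith)
  have := mul_le_mul h1 h2 (le_of_lt (Real.exp_pos _)) (by nlinarith)
  linarith

/-- f_z(Σ_z) = [4(1+gΣ_z) − 2gΣ_z(2 ln Σ_z − ln 4) − (2 ln Σ_z − ln 4)²]/Σ_z²,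
and f_z(Σ_z) → −∞ as z → ∞. In particular f_z(Σ_z) < 0 for all sufficiently large z,
and for such z every positive zero of f_z lies strictly above Σ_z. -/
theorem stmt_8 (g : ℝ) (hg : 0 < g) :
    (∀ z : ℝ, 0 < z →
      fz g z (sigmaZ g z) =
        (4 * (1 + g * sigmaZ g z)
          - 2 * g * sigmaZ g z * (2 * Real.log (sigmaZ g z) - Real.log 4)
          - (2 * Real.log (sigmaZ g z) - Real.log 4) ^ 2) / (sigmaZ g z) ^ 2) ∧
    Filter.Tendsto (fun z => fz g z (sigmaZ g z)) Filter.atTop Filter.atBot ∧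
    ∃ z₀ : ℝ, ∀ z : ℝ, z₀ ≤ z →
      fz g z (sigmaZ g z) < 0 ∧
      ∀ S : ℝ, 0 < S → fz g z S = 0 → sigmaZ g z < S := by
  set z₀ := max (Real.exp (Real.sqrt (8 * (1 + 2 * g)))) (8 * g) with hz₀
  have hz₀pos : 0 < z₀ := lt_of_lt_of_le (Real.exp_pos _) (le_max_left _ _)
  have hbound : ∀ z : ℝ, z₀ ≤ z → fz g z (sigmaZ g z) ≤ -(g + z) ^ 2 / 4 := by
    intro z hz
    apply fz_bound g z hg
    · calc Real.exp (Real.sqrt (8 * (1 + 2 * g))) ≤ z₀ := le_max_left _ _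
        _ ≤ z := hz
        _ ≤ g + z := by linarith
    · calc (8 : ℝ) * g ≤ z₀ := le_max_right _ _
        _ ≤ z := hz
        _ ≤ g + z := by linarith
  refine ⟨fun z hz => fz_identity g z (by linarith), ?_, ?_⟩
  · -- tendsto atBot
    apply Filter.tendsto_atBot_mono' Filter.atTop
      (Filter.eventually_atTop.mpr ⟨z₀, hbound⟩)
    have h1 : Filter.Tendsto (fun z : ℝ => g + z) Filter.atTop Filter.atTop :=
      Filter.tendsto_atTop_add_const_left _ g Filter.tendsto_id
    have h2 : Filter.Tendsto (fun z : ℝ => (g + z) ^ 2) Filter.atTop Filter.atTop :=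
      (Filter.tendsto_pow_atTop (by norm_num)).comp h1
    have h3 : Filter.Tendsto (fun z : ℝ => -(g + z) ^ 2) Filter.atTop Filter.atBot :=
      Filter.tendsto_neg_atTop_atBot.comp h2
    exact h3.atBot_div_const (by norm_num)
  · refine ⟨z₀, fun z hz => ?_⟩
    have ha : 0 < g + z := by linarith [hz₀pos]
    have hneg : fz g z (sigmaZ g z) < 0 := by
      have : -(g + z) ^ 2 / 4 < 0 := by
        have : 0 < (g + z) ^ 2 := by positivity
        linarith
      linarith [hbound z hz]
    refine ⟨hneg, fun S hSpos hSzero => ?_⟩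
    by_contra hle
    push_neg at hle
    have := fz_mono g z hg ha hSpos hle
    linarith
end

section
/- Fix g > 0 and suppose f_{z₀}(Σ_{z₀}) = 0 with Σ_{z₀} > 0 for some z₀ > √(1 + g²). Then there exist z_l, z_r > √(1 + g²) with z_l < z₀ < z_r such that f_z(Σ_z) > 0 for all z ∈ (z_l, z₀) and f_z(Σ_z) < 0 for all z ∈ (z₀, z_r). -/
namespace Stmt9Aux

/-- The defining function `F(S) = S - 2 exp(-(aS)/2)` is strictly monotone for `a > 0`. -/
lemma F_strictMono (a : ℝ) (ha : 0 < a) :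
    StrictMono (fun S : ℝ => S - 2 * Real.exp (-(a * S) / 2)) := by
  intro S1 S2 h
  have h1 : Real.exp (-(a * S2) / 2) < Real.exp (-(a * S1) / 2) :=
    Real.exp_lt_exp.mpr (by nlinarith)
  simp only
  nlinarith

/-- Existence of a positive fixed point. -/
lemma exists_fixed (a : ℝ) (ha : 0 < a) :
    ∃ S : ℝ, 0 < S ∧ S = 2 * Real.exp (-(a * S) / 2) := by
  set F : ℝ → ℝ := fun S => S - 2 * Real.exp (-(a * S) / 2) with hF
  have hcont : ContinuousOn F (Set.Icc 0 2) := by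
    apply Continuous.continuousOn; fun_prop
  have hF0 : F 0 = -2 := by simp [hF]
  have hF2 : 0 < F 2 := by
    have : Real.exp (-(a * 2) / 2) < 1 := by
      rw [← Real.exp_zero, Real.exp_lt_exp]; linarith
    simp only [hF]; nlinarith
  have hsub : Set.Icc (F 0) (F 2) ⊆ F '' Set.Icc 0 2 :=
    intermediate_value_Icc (by norm_num) hcont
  have h0 : (0 : ℝ) ∈ Set.Icc (F 0) (F 2) := by
    constructor <;> [rw [hF0]; skip] <;> linarith
  obtain ⟨S, hS, hFS⟩ := hsub h0
  refine ⟨S, ?_, by simp only [hF] at hFS; linarith⟩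
  rcases lt_or_eq_of_le hS.1 with h | h
  · exact h
  · exfalso; rw [← h] at hFS; rw [hF0] at hFS; norm_num at hFS

/-- `sigmaZ g z` is the unique positive fixed point when `g + z > 0`. -/
lemma sigmaZ_spec (g z : ℝ) (h : 0 < g + z) :
    0 < sigmaZ g z ∧
      sigmaZ g z = 2 * Real.exp (-((g + z) * sigmaZ g z) / 2) := by
  obtain ⟨S, hSpos, hSfix⟩ := exists_fixed (g + z) h
  have hset : {S' : ℝ | 0 < S' ∧ S' = 2 * Real.exp (-((g + z) * S') / 2)} = {S} := by
    ext T
    simp only [Set.mem_setOf_eq, Set.mem_singleton_iff]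
    constructor
    · rintro ⟨hTpos, hTfix⟩
      have hFT : T - 2 * Real.exp (-((g + z) * T) / 2)
          = S - 2 * Real.exp (-((g + z) * S) / 2) := by linarith
      exact (F_strictMono (g + z) h).injective hFT
    · rintro rfl; exact ⟨hSpos, hSfix⟩
  rw [sigmaZ, hset, csInf_singleton]
  exact ⟨hSpos, hSfix⟩

/-- Comparison: `sigmaZ g z < T ↔ 2 exp(-(g+z)T/2) < T`. -/
lemma sigmaZ_lt_iff (g z T : ℝ) (h : 0 < g + z) :
    sigmaZ g z < T ↔ 2 * Real.exp (-((g + z) * T) / 2) < T := by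
  obtain ⟨hpos, hfix⟩ := sigmaZ_spec g z h
  have this : sigmaZ g z - 2 * Real.exp (-((g + z) * sigmaZ g z) / 2)
      < T - 2 * Real.exp (-((g + z) * T) / 2) ↔ sigmaZ g z < T :=
    (F_strictMono (g + z) h).lt_iff_lt
  rw [← this]
  constructor <;> intro hh <;> linarith

lemma lt_sigmaZ_iff (g z T : ℝ) (h : 0 < g + z) :
    T < sigmaZ g z ↔ T < 2 * Real.exp (-((g + z) * T) / 2) := by
  obtain ⟨hpos, hfix⟩ := sigmaZ_spec g z h
  have this : T - 2 * Real.exp (-((g + z) * T) / 2)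
      < sigmaZ g z - 2 * Real.exp (-((g + z) * sigmaZ g z) / 2) ↔ T < sigmaZ g z :=
    (F_strictMono (g + z) h).lt_iff_lt
  rw [← this]
  constructor <;> intro hh <;> linarith

/-- The reduced sign function. -/
noncomputable def u (g z : ℝ) : ℝ := (g + z) / (z - g) - Real.log (z - g)

/-- Sign characterization: for `g < z`, `fz g z (sigmaZ g z)` has the sign of `u g z`. -/
lemma sign_pos (g z : ℝ) (hg : 0 < g) (hz : g < z) :
    (0 < fz g z (sigmaZ g z) ↔ 0 < u g z) ∧
    (fz g z (sigmaZ g z) < 0 ↔ u g z < 0) := by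
  have ha : 0 < g + z := by linarith
  have hzg : 0 < z - g := by linarith
  obtain ⟨hpos, hfix⟩ := sigmaZ_spec g z ha
  set S := sigmaZ g z with hS
  -- e^{(g+z)S} = 4/S²
  have hE : S ^ 2 * Real.exp ((g + z) * S) = 4 := by
    have hsq : S ^ 2 = 4 * Real.exp (-((g + z) * S)) := by
      calc S ^ 2 = (2 * Real.exp (-((g + z) * S) / 2)) ^ 2 := by rw [← hfix]
        _ = 4 * (Real.exp (-((g + z) * S) / 2) * Real.exp (-((g + z) * S) / 2)) := by ring
        _ = 4 * Real.exp (-((g + z) * S) / 2 + -((g + z) * S) / 2) := by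
            rw [Real.exp_add]
        _ = 4 * Real.exp (-((g + z) * S)) := by norm_num
    rw [hsq, mul_assoc, ← Real.exp_add]
    simp
  -- key algebraic identity: S² · fz = (gS+2-zS)(gS+2+zS)
  have hkey : S ^ 2 * fz g z S = (g * S + 2 - z * S) * (g * S + 2 + z * S) := by
    rw [fz]; linear_combination (1 + g * S) * hE
  have hfac2 : 0 < g * S + 2 + z * S := by nlinarith
  -- sign of 2 - (z-g)S  vs  u
  have hcmp : (0 < 2 - (z - g) * S ↔ 0 < u g z) ∧ (2 - (z - g) * S < 0 ↔ u g z < 0) := by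
    have hT : S < 2 / (z - g) ↔ 2 * Real.exp (-((g + z) * (2 / (z - g))) / 2) < 2 / (z - g) :=
      sigmaZ_lt_iff g z _ ha
    have hT' : 2 / (z - g) < S ↔ 2 / (z - g) < 2 * Real.exp (-((g + z) * (2 / (z - g))) / 2) :=
      lt_sigmaZ_iff g z _ ha
    have h12 : (2 : ℝ) / (z - g) = 2 * (1 / (z - g)) := by ring
    have harg : -((g + z) * (2 / (z - g))) / 2 = -((g + z) / (z - g)) := by
      field_simp
    have hlog : Real.exp (-((g + z) / (z - g))) < 1 / (z - g) ↔ 0 < u g z := by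
      rw [← Real.lt_log_iff_exp_lt (by positivity), Real.log_div one_ne_zero (ne_of_gt hzg),
        Real.log_one, u]
      constructor <;> intro hh <;> linarith
    have hlog' : 1 / (z - g) < Real.exp (-((g + z) / (z - g))) ↔ u g z < 0 := by
      rw [show (1 : ℝ) / (z - g) = Real.exp (Real.log (1 / (z - g))) by
        rw [Real.exp_log (by positivity)], Real.exp_lt_exp,
        Real.log_div one_ne_zero (ne_of_gt hzg), Real.log_one, u]
      constructor <;> intro hh <;> linarith
    rw [harg] at hT hT'
    constructor
    · rw [show (0 < 2 - (z - g) * S) ↔ S < 2 / (z - g) by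
        rw [lt_div_iff₀ hzg]; constructor <;> intro hh <;> nlinarith]
      rw [hT, ← hlog]
      constructor <;> intro hh <;> linarith
    · rw [show (2 - (z - g) * S < 0) ↔ 2 / (z - g) < S by
        rw [div_lt_iff₀ hzg]; constructor <;> intro hh <;> nlinarith]
      rw [hT', ← hlog']
      constructor <;> intro hh <;> linarith
  constructor
  · rw [← hcmp.1]
    constructor
    · intro hh
      nlinarith [hkey, hfac2, mul_pos (pow_pos hpos 2) hh]
    · intro hh
      nlinarith [hkey, pow_pos hpos 2, mul_pos hh hfac2]
  · rw [← hcmp.2]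
    constructor
    · intro hh
      nlinarith [hkey, hfac2, mul_neg_of_pos_of_neg (pow_pos hpos 2) hh]
    · intro hh
      nlinarith [hkey, pow_pos hpos 2, mul_neg_of_neg_of_pos hh hfac2]

/-- `u g` is strictly decreasing on `(g, ∞)`. -/
lemma u_anti (g z1 z2 : ℝ) (hg : 0 < g) (h1 : g < z1) (h2 : z1 < z2) :
    u g z2 < u g z1 := by
  have hzg1 : 0 < z1 - g := by linarith
  have hzg2 : 0 < z2 - g := by linarith
  have hdiv : (g + z2) / (z2 - g) < (g + z1) / (z1 - g) := by
    rw [div_lt_div_iff₀ hzg2 hzg1]; nlinarith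
  have hlog : Real.log (z1 - g) < Real.log (z2 - g) :=
    Real.log_lt_log hzg1 (by linarith)
  rw [u, u]; linarith

end Stmt9Aux

/-- Claim 1: if z₀ > √(1+g²) satisfies f_{z₀}(Σ_{z₀}) = 0 with Σ_{z₀} > 0,
then there are z_l < z₀ < z_r (both > √(1+g²)) with f_z(Σ_z) > 0 on (z_l, z₀) and
f_z(Σ_z) < 0 on (z₀, z_r). -/
theorem stmt_9 (g z₀ : ℝ) (hg : 0 < g) (hz₀ : Real.sqrt (1 + g ^ 2) < z₀)
    (hpos : 0 < sigmaZ g z₀) (hzero : fz g z₀ (sigmaZ g z₀) = 0) :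
    ∃ zl zr : ℝ, Real.sqrt (1 + g ^ 2) < zl ∧ Real.sqrt (1 + g ^ 2) < zr ∧
      zl < z₀ ∧ z₀ < zr ∧
      (∀ z ∈ Set.Ioo zl z₀, 0 < fz g z (sigmaZ g z)) ∧
      (∀ z ∈ Set.Ioo z₀ zr, fz g z (sigmaZ g z) < 0) := by
  have hgs : g < Real.sqrt (1 + g ^ 2) := by
    exact (Real.lt_sqrt hg.le).mpr (by nlinarith)
  have hgz₀ : g < z₀ := lt_trans hgs hz₀
  -- u g z₀ = 0
  have hsign := Stmt9Aux.sign_pos g z₀ hg hgz₀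
  have hu0 : Stmt9Aux.u g z₀ = 0 := by
    by_contra h
    rcases lt_or_gt_of_ne h with h' | h'
    · have := hsign.2.mpr h'; linarith
    · have := hsign.1.mpr h'; linarith
  refine ⟨(Real.sqrt (1 + g ^ 2) + z₀) / 2, z₀ + 1, by linarith, by linarith,
    by linarith, by linarith, ?_, ?_⟩
  · rintro z ⟨hz1, hz2⟩
    have hgz : g < z := by
      have : Real.sqrt (1 + g ^ 2) < z := by linarith
      linarith
    exact (Stmt9Aux.sign_pos g z hg hgz).1.mpr
      (by have := Stmt9Aux.u_anti g z z₀ hg hgz hz2; linarith)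
  · rintro z ⟨hz1, hz2⟩
    have hgz : g < z := by linarith
    exact (Stmt9Aux.sign_pos g z hg hgz).2.mpr
      (by have := Stmt9Aux.u_anti g z₀ z hg hgz₀ hz1; linarith)
end

section
/- Let φ be a nonconstant C² solution of ε φ''(x) = f(φ(x)) on (−1,1) with the Robin boundary conditions, where f satisfies (F1) or (F2) with zero c and the boundary data lie in the domain of f. If φ₀(1) ≥ c ≥ φ₀(−1), then φ is monotone increasing on (−1,1); if φ₀(1) ≤ c ≤ φ₀(−1), then φ is monotone decreasing on (−1,1). -/
open Set Filter

open Topology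

set_option maxHeartbeats 2000000 in
/-- Lemma, parts (iii)-(iv): for a nonconstant C² solution φ of
ε φ'' = f(φ) on (−1,1) with Robin boundary conditions, where f satisfies (F1) or (F2)
with zero c and the boundary data lie in the domain of f:
if φ₀(1) ≥ c ≥ φ₀(−1) then φ is monotone increasing on (−1,1);
if φ₀(1) ≤ c ≤ φ₀(−1) then φ is monotone decreasing on (−1,1). -/
theorem stmt_15
    (f : ℝ → ℝ) (dom : Set ℝ) (c : ℝ)
    (hmono : StrictMonoOn f dom) (hsmooth : ContDiffOn ℝ (⊤ : ℕ∞) f dom)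
    (hc : c ∈ interior dom) (hfc : f c = 0)
    (hdom : (∃ A M : ℝ, A < 0 ∧ 0 < M ∧ dom = Icc A M ∧ f A < 0 ∧ 0 < f M) ∨
            (∃ A : ℝ, A < 0 ∧ dom = Ici A ∧ f A < 0 ∧ ∃ y ∈ dom, 0 < f y) ∨
            (∃ B : ℝ, 0 < B ∧ dom = Iic B ∧ 0 < f B ∧ ∃ y ∈ dom, f y < 0))
    (ε η φ0m φ0p : ℝ) (hε : 0 < ε) (hη : 0 ≤ η)
    (hbm : φ0m ∈ dom) (hbp : φ0p ∈ dom)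
    (φ dφ ddφ : ℝ → ℝ)
    (hreg1 : ∀ x ∈ Icc (-1:ℝ) 1, HasDerivWithinAt φ (dφ x) (Icc (-1:ℝ) 1) x)
    (hreg2 : ∀ x ∈ Icc (-1:ℝ) 1, HasDerivWithinAt dφ (ddφ x) (Icc (-1:ℝ) 1) x)
    (hreg3 : ContinuousOn ddφ (Icc (-1:ℝ) 1))
    (hval : ∀ x ∈ Icc (-1:ℝ) 1, φ x ∈ dom)
    (heq : ∀ x ∈ Ioo (-1:ℝ) 1, ε * ddφ x = f (φ x))
    (hbc1 : φ 1 + η * dφ 1 = φ0p)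
    (hbc2 : φ (-1) - η * dφ (-1) = φ0m)
    (hnc : ∃ x ∈ Icc (-1:ℝ) 1, ∃ y ∈ Icc (-1:ℝ) 1, φ x ≠ φ y) :
    (φ0m ≤ c → c ≤ φ0p → MonotoneOn φ (Ioo (-1:ℝ) 1)) ∧
    (φ0p ≤ c → c ≤ φ0m → AntitoneOn φ (Ioo (-1:ℝ) 1)) := by
  have h1mem : (1:ℝ) ∈ Icc (-1:ℝ) 1 := by norm_num
  have hm1mem : (-1:ℝ) ∈ Icc (-1:ℝ) 1 := by norm_num
  have hIoo : ∀ x ∈ Ioo (-1:ℝ) 1, Icc (-1:ℝ) 1 ∈ 𝓝 x := fun x hx => Icc_mem_nhds hx.1 hx.2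
  have hφc : ContinuousOn φ (Icc (-1:ℝ) 1) := fun x hx => (hreg1 x hx).continuousWithinAt
  have hdφc : ContinuousOn dφ (Icc (-1:ℝ) 1) := fun x hx => (hreg2 x hx).continuousWithinAt
  have hφ' : ∀ x ∈ Ioo (-1:ℝ) 1, HasDerivAt φ (dφ x) x := fun x hx =>
    (hreg1 x (Ioo_subset_Icc_self hx)).hasDerivAt (hIoo x hx)
  have hdφ' : ∀ x ∈ Ioo (-1:ℝ) 1, HasDerivAt dφ (ddφ x) x := fun x hx =>
    (hreg2 x (Ioo_subset_Icc_self hx)).hasDerivAt (hIoo x hx)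
  have hcd : c ∈ dom := interior_subset hc
  have hOC : OrdConnected dom := by
    rcases hdom with ⟨A, M, _, _, rfl, _, _⟩ | ⟨A, _, rfl, _, _⟩ | ⟨B, _, rfl, _, _⟩
    exacts [ordConnected_Icc, ordConnected_Ici, ordConnected_Iic]
  have hfcont : ContinuousOn f dom := hsmooth.continuousOn
  -- min and max of φ on [-1,1]
  have hneI : (Icc (-1:ℝ) 1).Nonempty := ⟨0, by norm_num⟩
  obtain ⟨zlo, hzlo, hlo'⟩ := isCompact_Icc.exists_isMinOn hneI hφc
  obtain ⟨zhi, hzhi, hhi'⟩ := isCompact_Icc.exists_isMaxOn hneI hφc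
  have hlo : ∀ x ∈ Icc (-1:ℝ) 1, φ zlo ≤ φ x := fun x hx => hlo' hx
  have hhi : ∀ x ∈ Icc (-1:ℝ) 1, φ x ≤ φ zhi := fun x hx => hhi' hx
  set p := min c (φ zlo) with hp
  set q := max c (φ zhi) with hq
  have hpd : p ∈ dom := by
    rcases le_total c (φ zlo) with h | h
    · rw [hp, min_eq_left h]; exact hcd
    · rw [hp, min_eq_right h]; exact hval zlo hzlo
  have hqd : q ∈ dom := by
    rcases le_total c (φ zhi) with h | h
    · rw [hq, max_eq_right h]; exact hval zhi hzhi
    · rw [hq, max_eq_left h]; exact hcd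
  have hsub : Icc p q ⊆ dom := hOC.out hpd hqd
  have hcpq : c ∈ Icc p q := ⟨min_le_left _ _, le_max_left _ _⟩
  have hmaps : MapsTo φ (Icc (-1:ℝ) 1) (Icc p q) := fun x hx =>
    ⟨le_trans (min_le_right _ _) (hlo x hx), le_trans (hhi x hx) (le_max_right _ _)⟩
  -- Lipschitz bound for f on Icc p q
  have hUD : UniqueDiffOn ℝ dom := by
    rcases hdom with ⟨A, M, hA, hM, rfl, _, _⟩ | ⟨A, _, rfl, _, _⟩ | ⟨B, _, rfl, _, _⟩
    exacts [uniqueDiffOn_Icc (hA.trans hM), uniqueDiffOn_Ici A, uniqueDiffOn_Iic B]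
  have hdiff : DifferentiableOn ℝ f dom := hsmooth.differentiableOn (by simp)
  have hdwc : ContinuousOn (derivWithin f dom) dom := hsmooth.continuousOn_derivWithin hUD (by simp)
  obtain ⟨C0, hC0⟩ := isCompact_Icc.exists_bound_of_continuousOn (hdwc.mono hsub)
  obtain ⟨C, hC, hCb⟩ : ∃ C : ℝ, 0 ≤ C ∧ ∀ w ∈ Icc p q, ‖derivWithin f dom w‖ ≤ C :=
    ⟨max C0 0, le_max_right _ _, fun w hw => le_trans (hC0 w hw) (le_max_left _ _)⟩
  have hflip : ∀ y ∈ Icc p q, ∀ z ∈ Icc p q, |f y - f z| ≤ C * |y - z| := by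
    intro y hy z hz
    have := (convex_Icc p q).norm_image_sub_le_of_norm_hasDerivWithin_le
      (f' := fun w => derivWithin f dom w)
      (fun w hw => ((hdiff w (hsub hw)).hasDerivWithinAt).mono hsub)
      hCb hz hy
    simpa [Real.norm_eq_abs] using this
  -- the primitive F of f based at c
  set F : ℝ → ℝ := fun y => ∫ t in c..y, f t with hF
  have hfint : ∀ y ∈ dom, IntervalIntegrable f MeasureTheory.volume c y := fun y hy =>
    (hfcont.mono (hOC.uIcc_subset hcd hy)).intervalIntegrable
  have hFd : ∀ y ∈ Icc p q, HasDerivWithinAt F (f y) (Icc p q) y := by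
    intro y hy
    haveI : Fact (y ∈ Icc p q) := ⟨hy⟩
    exact intervalIntegral.integral_hasDerivWithinAt_right (hfint y (hsub hy))
      ⟨Icc p q, self_mem_nhdsWithin, (hfcont.mono hsub).aestronglyMeasurable measurableSet_Icc⟩
      ((hfcont.mono hsub) y hy)
  have hFcont : ContinuousOn F (Icc p q) := fun y hy => (hFd y hy).continuousWithinAt
  have hFc : F c = 0 := intervalIntegral.integral_same
  have hFpos : ∀ y ∈ dom, y ≠ c → 0 < F y := by
    intro y hy hyc
    rcases hyc.lt_or_gt with h | h
    · -- y < c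
      have hIsub : Icc y c ⊆ dom := hOC.out hy hcd
      have hint : IntervalIntegrable f MeasureTheory.volume y c :=
        (hfcont.mono (by rw [uIcc_of_le h.le]; exact hIsub)).intervalIntegrable
      have hpos : 0 < ∫ t in y..c, (-f t) := by
        apply intervalIntegral.intervalIntegral_pos_of_pos_on hint.neg
        · intro t ht
          have hfl : f t < f c := hmono (hIsub ⟨ht.1.le, ht.2.le⟩) hcd ht.2
          show (0:ℝ) < -f t
          linarith [hfc ▸ hfl]
        · exact h
      have hneg : ∫ t in y..c, (-f t) = -∫ t in y..c, f t := intervalIntegral.integral_neg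
      have hsym : ∫ t in c..y, f t = -∫ t in y..c, f t := intervalIntegral.integral_symm y c
      have hFy : F y = ∫ t in c..y, f t := rfl
      rw [hFy, hsym]
      rw [hneg] at hpos
      linarith
    · -- c < y
      apply intervalIntegral.intervalIntegral_pos_of_pos_on (hfint y hy) _ h
      intro t ht
      have htd : t ∈ dom := hOC.out hcd hy ⟨ht.1.le, ht.2.le⟩
      have := hmono hcd htd ht.1
      linarith [hfc ▸ this]
  -- energy is constant
  have hE' : ∀ x ∈ Ioo (-1:ℝ) 1,
      HasDerivAt (fun x => ε * (dφ x * dφ x) / 2 - F (φ x)) 0 x := by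
    intro x hx
    have h1 : HasDerivAt (fun x => ε * (dφ x * dφ x) / 2)
        (ε * (ddφ x * dφ x + dφ x * ddφ x) / 2) x :=
      (((hdφ' x hx).mul (hdφ' x hx)).const_mul ε).div_const 2
    have h2 : HasDerivAt (fun x => F (φ x)) (f (φ x) * dφ x) x := by
      have hcomp := (hFd (φ x) (hmaps (Ioo_subset_Icc_self hx))).comp x
        (hreg1 x (Ioo_subset_Icc_self hx)) hmaps
      exact (hcomp.hasDerivAt (hIoo x hx) : HasDerivAt (F ∘ φ) _ x)
    have h3 := h1.sub h2
    rw [show (0:ℝ) = ε * (ddφ x * dφ x + dφ x * ddφ x) / 2 - f (φ x) * dφ x by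
      linear_combination (-(dφ x)) * heq x hx]
    exact h3
  have hEcont : ContinuousOn (fun x => ε * (dφ x * dφ x) / 2 - F (φ x)) (Icc (-1:ℝ) 1) := by
    apply ContinuousOn.sub
    · exact (continuousOn_const.mul (hdφc.mul hdφc)).div_const 2
    · exact hFcont.comp hφc hmaps
  have hEconst : ∀ a ∈ Ioo (-1:ℝ) 1, ∀ b ∈ Ioo (-1:ℝ) 1, a ≤ b →
      ε * (dφ b * dφ b) / 2 - F (φ b) = ε * (dφ a * dφ a) / 2 - F (φ a) := by
    intro a ha b hb hab
    exact constant_of_has_deriv_right_zero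
      (hEcont.mono (Icc_subset_Icc ha.1.le hb.2.le))
      (fun t ht => ((hE' t ⟨lt_of_lt_of_le ha.1 ht.1, ht.2.trans hb.2⟩)).hasDerivWithinAt)
      b (right_mem_Icc.2 hab)
  -- key: an interior critical point forces both boundary data on the same side of c
  have key : ∀ x0 ∈ Ioo (-1:ℝ) 1, dφ x0 = 0 →
      (c < φ0m ∧ c < φ0p) ∨ (φ0m < c ∧ φ0p < c) := by
    intro x0 hx0 hdx0
    have hx0I : x0 ∈ Icc (-1:ℝ) 1 := Ioo_subset_Icc_self hx0
    rcases lt_trichotomy (φ x0) c with hlt | heqc | hgt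
    · -- φ x0 < c : both boundary data below c
      right
      have hx0d : φ x0 ∈ dom := hval x0 hx0I
      have hF0 : 0 < F (φ x0) := hFpos _ hx0d (ne_of_lt hlt)
      have hEx : ∀ x ∈ Ioo (-1:ℝ) 1, ε * (dφ x * dφ x) / 2 - F (φ x) = -F (φ x0) := by
        intro x hx
        have h8 : ε * (dφ x * dφ x) / 2 - F (φ x) = ε * (dφ x0 * dφ x0) / 2 - F (φ x0) := by
          rcases le_total x x0 with h | h
          · exact (hEconst x hx x0 hx0 h).symm
          · exact hEconst x0 hx0 x hx h
        rw [hdx0] at h8; linarith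
      have hnec : ∀ x ∈ Ioo (-1:ℝ) 1, φ x ≠ c := by
        intro x hx hxc
        have h9 := hEx x hx
        rw [hxc, hFc] at h9
        nlinarith [mul_self_nonneg (dφ x)]
      have hltall : ∀ x ∈ Ioo (-1:ℝ) 1, φ x < c := by
        intro x hx
        rcases lt_or_ge (φ x) c with h | h
        · exact h
        · exfalso
          have hgt' : c < φ x := lt_of_le_of_ne h (Ne.symm (hnec x hx))
          have hsubI : uIcc x0 x ⊆ Ioo (-1:ℝ) 1 := ordConnected_Ioo.uIcc_subset hx0 hx
          have hcmem : c ∈ uIcc (φ x0) (φ x) := by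
            rw [mem_uIcc]; left; exact ⟨hlt.le, hgt'.le⟩
          obtain ⟨z, hz, hzc⟩ :=
            intermediate_value_uIcc (hφc.mono (hsubI.trans Ioo_subset_Icc_self)) hcmem
          exact hnec z (hsubI hz) hzc
      have hdd : ∀ x ∈ Ioo (-1:ℝ) 1, ddφ x < 0 := by
        intro x hx
        have h9 : f (φ x) < 0 := by
          have := hmono (hval x (Ioo_subset_Icc_self hx)) hcd (hltall x hx)
          linarith [hfc ▸ this]
        nlinarith [heq x hx]
      have hsa : StrictAntiOn dφ (Icc (-1:ℝ) 1) := by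
        apply strictAntiOn_of_deriv_neg (convex_Icc _ _) hdφc
        intro x hx
        rw [interior_Icc] at hx
        rw [(hdφ' x hx).deriv]
        exact hdd x hx
      have hd1 : dφ 1 < 0 := by
        have := hsa hx0I h1mem hx0.2
        rwa [hdx0] at this
      have hdm1 : 0 < dφ (-1) := by
        have := hsa hm1mem hx0I hx0.1
        rwa [hdx0] at this
      have hmono2 : MonotoneOn φ (Icc (-1:ℝ) x0) := by
        apply monotoneOn_of_deriv_nonneg (convex_Icc _ _)
          (hφc.mono (Icc_subset_Icc le_rfl hx0.2.le))
        · intro x hx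
          rw [interior_Icc] at hx
          have hxI : x ∈ Ioo (-1:ℝ) 1 := ⟨hx.1, hx.2.trans hx0.2⟩
          exact (hφ' x hxI).differentiableAt.differentiableWithinAt
        · intro x hx
          rw [interior_Icc] at hx
          have hxI : x ∈ Ioo (-1:ℝ) 1 := ⟨hx.1, hx.2.trans hx0.2⟩
          rw [(hφ' x hxI).deriv]
          have h10 : dφ x0 < dφ x := hsa (Ioo_subset_Icc_self hxI) hx0I hx.2
          rw [hdx0] at h10; exact h10.le
      have hanti2 : AntitoneOn φ (Icc x0 1) := by
        apply antitoneOn_of_deriv_nonpos (convex_Icc _ _)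
          (hφc.mono (Icc_subset_Icc hx0.1.le le_rfl))
        · intro x hx
          rw [interior_Icc] at hx
          have hxI : x ∈ Ioo (-1:ℝ) 1 := ⟨hx0.1.trans hx.1, hx.2⟩
          exact (hφ' x hxI).differentiableAt.differentiableWithinAt
        · intro x hx
          rw [interior_Icc] at hx
          have hxI : x ∈ Ioo (-1:ℝ) 1 := ⟨hx0.1.trans hx.1, hx.2⟩
          rw [(hφ' x hxI).deriv]
          have h10 : dφ x < dφ x0 := hsa hx0I (Ioo_subset_Icc_self hxI) hx.1
          rw [hdx0] at h10; exact h10.le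
      have hφm1 : φ (-1) ≤ φ x0 :=
        hmono2 (left_mem_Icc.2 hx0.1.le) (right_mem_Icc.2 hx0.1.le) hx0.1.le
      have hφ1 : φ 1 ≤ φ x0 :=
        hanti2 (left_mem_Icc.2 hx0.2.le) (right_mem_Icc.2 hx0.2.le) hx0.2.le
      constructor
      · rw [← hbc2]
        nlinarith [mul_nonneg hη hdm1.le]
      · rw [← hbc1]
        nlinarith [mul_nonneg hη (neg_nonneg.2 hd1.le)]
    · -- φ x0 = c : φ is constant, contradiction
      exfalso
      set K := max 1 (C / ε) with hK
      set v : ℝ → ℝ × ℝ := fun x => (φ x - c, dφ x) with hv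
      have hvx0 : v x0 = 0 := by
        rw [hv]; simp [heqc, hdx0, Prod.ext_iff]
      have hvcont : ContinuousOn v (Icc (-1:ℝ) 1) := (hφc.sub continuousOn_const).prodMk hdφc
      have hv' : ∀ x ∈ Ioo (-1:ℝ) 1, HasDerivAt v (dφ x, ddφ x) x := fun x hx =>
        ((hφ' x hx).sub_const c).prodMk (hdφ' x hx)
      have hnv : ∀ x, ‖v x‖ = max |φ x - c| |dφ x| := by
        intro x; rw [hv]; simp [Prod.norm_def, Real.norm_eq_abs]
      have hbound : ∀ x ∈ Ioo (-1:ℝ) 1, ‖(dφ x, ddφ x)‖ ≤ K * ‖v x‖ := by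
        intro x hx
        have hd : ddφ x = f (φ x) / ε := by
          field_simp
          linarith [heq x hx]
        have hfb : |f (φ x)| ≤ C * |φ x - c| := by
          have := hflip (φ x) (hmaps (Ioo_subset_Icc_self hx)) c hcpq
          rwa [hfc, sub_zero] at this
        have hK1 : (1:ℝ) ≤ K := le_max_left _ _
        have hK2 : C / ε ≤ K := le_max_right _ _
        have h5 : |φ x - c| ≤ ‖v x‖ := by rw [hnv]; exact le_max_left _ _
        have h6 : |dφ x| ≤ ‖v x‖ := by rw [hnv]; exact le_max_right _ _
        have hvnn : (0:ℝ) ≤ ‖v x‖ := norm_nonneg _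
        have h1 : |dφ x| ≤ K * ‖v x‖ := by
          nlinarith [mul_nonneg (sub_nonneg.2 hK1) hvnn]
        have hC' : C ≤ K * ε := (div_le_iff₀ hε).1 hK2
        have h2 : |ddφ x| ≤ K * ‖v x‖ := by
          have he1 : ε * |ddφ x| = |f (φ x)| := by
            rw [← abs_of_pos hε, ← abs_mul, heq x hx]
          nlinarith [mul_nonneg hC (sub_nonneg.2 h5), mul_nonneg (sub_nonneg.2 hC') hvnn,
            abs_nonneg (φ x - c), abs_nonneg (ddφ x)]
        rw [Prod.norm_def]
        simp only [Real.norm_eq_abs]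
        exact max_le h1 h2
      have hfwd : ∀ s ∈ Icc x0 (1:ℝ), v s = 0 := by
        have hg := norm_le_gronwallBound_of_norm_deriv_right_le (f := v)
          (f' := fun x => (dφ x, ddφ x)) (δ := 0) (K := K) (ε := 0) (a := x0) (b := 1)
          (hvcont.mono (Icc_subset_Icc hx0.1.le le_rfl))
          (fun x hx => (hv' x ⟨hx0.1.trans_le hx.1, hx.2⟩).hasDerivWithinAt)
          (by simp [hvx0])
          (fun x hx => by simpa using hbound x ⟨hx0.1.trans_le hx.1, hx.2⟩)
        intro s hs
        have := hg s hs
        rw [gronwallBound_ε0_δ0] at this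
        exact norm_le_zero_iff.1 this
      have hbwd : ∀ s ∈ Icc (-1:ℝ) x0, v s = 0 := by
        set w : ℝ → ℝ × ℝ := fun t => v (-t) with hw
        have hwcont : ContinuousOn w (Icc (-x0) 1) := by
          apply hvcont.comp (continuous_neg.continuousOn)
          intro t ht
          show -t ∈ Icc (-1:ℝ) 1
          exact ⟨by linarith [ht.2], by linarith [ht.1, hx0.2.le]⟩
        have hw' : ∀ x ∈ Ico (-x0) (1:ℝ),
            HasDerivWithinAt w (dφ (-x) * -1, ddφ (-x) * -1) (Ici x) x := by
          intro x hx
          have hx1 : (-1:ℝ) < -x := by linarith [hx.2]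
          have hx2 : -x < 1 := by linarith [hx.1, hx0.2]
          have hmx : -x ∈ Ioo (-1:ℝ) 1 := ⟨hx1, hx2⟩
          have hc1 : HasDerivAt (fun t : ℝ => φ (-t) - c) (dφ (-x) * -1) x :=
            ((hφ' (-x) hmx).comp x (hasDerivAt_neg' x)).sub_const c
          have hc2 : HasDerivAt (fun t : ℝ => dφ (-t)) (ddφ (-x) * -1) x :=
            (hdφ' (-x) hmx).comp x (hasDerivAt_neg' x)
          exact ((hc1.prodMk hc2 : HasDerivAt w _ x)).hasDerivWithinAt
        have hgw := norm_le_gronwallBound_of_norm_deriv_right_le (f := w)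
          (f' := fun x => (dφ (-x) * -1, ddφ (-x) * -1)) (δ := 0) (K := K) (ε := 0)
          (a := -x0) (b := 1) hwcont hw'
          (by rw [hw]; simp [neg_neg, hvx0])
          (fun x hx => by
            have hx1 : (-1:ℝ) < -x := by linarith [hx.2]
            have hx2 : -x < 1 := by linarith [hx.1, hx0.2]
            have hb := hbound (-x) ⟨hx1, hx2⟩
            rw [hw]
            simpa [Prod.norm_def, Real.norm_eq_abs, mul_neg_one, abs_neg] using hb)
        intro s hs
        have h7 := hgw (-s) ⟨by linarith [hs.2], by linarith [hs.1]⟩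
        rw [gronwallBound_ε0_δ0] at h7
        have h8 := norm_le_zero_iff.1 h7
        rw [hw] at h8
        simpa [neg_neg] using h8
      have hall : ∀ t ∈ Icc (-1:ℝ) 1, φ t = c := by
        intro t ht
        have hv0 : v t = 0 := by
          rcases le_total t x0 with h | h
          · exact hbwd t ⟨ht.1, h⟩
          · exact hfwd t ⟨h, ht.2⟩
        have := congrArg Prod.fst hv0
        rw [hv] at this
        simpa [sub_eq_zero] using this
      obtain ⟨x, hx, y, hy, hne'⟩ := hnc
      exact hne' (by rw [hall x hx, hall y hy])
    · -- φ x0 > c : both boundary data above c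
      left
      have hx0d : φ x0 ∈ dom := hval x0 hx0I
      have hF0 : 0 < F (φ x0) := hFpos _ hx0d (ne_of_gt hgt)
      have hEx : ∀ x ∈ Ioo (-1:ℝ) 1, ε * (dφ x * dφ x) / 2 - F (φ x) = -F (φ x0) := by
        intro x hx
        have h8 : ε * (dφ x * dφ x) / 2 - F (φ x) = ε * (dφ x0 * dφ x0) / 2 - F (φ x0) := by
          rcases le_total x x0 with h | h
          · exact (hEconst x hx x0 hx0 h).symm
          · exact hEconst x0 hx0 x hx h
        rw [hdx0] at h8; linarith
      have hnec : ∀ x ∈ Ioo (-1:ℝ) 1, φ x ≠ c := by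
        intro x hx hxc
        have h9 := hEx x hx
        rw [hxc, hFc] at h9
        nlinarith [mul_self_nonneg (dφ x)]
      have hgtall : ∀ x ∈ Ioo (-1:ℝ) 1, c < φ x := by
        intro x hx
        rcases lt_or_ge c (φ x) with h | h
        · exact h
        · exfalso
          have hlt' : φ x < c := lt_of_le_of_ne h (hnec x hx)
          have hsubI : uIcc x x0 ⊆ Ioo (-1:ℝ) 1 := ordConnected_Ioo.uIcc_subset hx hx0
          have hcmem : c ∈ uIcc (φ x) (φ x0) := by
            rw [mem_uIcc]; left; exact ⟨hlt'.le, hgt.le⟩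
          obtain ⟨z, hz, hzc⟩ :=
            intermediate_value_uIcc (hφc.mono (hsubI.trans Ioo_subset_Icc_self)) hcmem
          exact hnec z (hsubI hz) hzc
      have hdd : ∀ x ∈ Ioo (-1:ℝ) 1, 0 < ddφ x := by
        intro x hx
        have h9 : 0 < f (φ x) := by
          have := hmono hcd (hval x (Ioo_subset_Icc_self hx)) (hgtall x hx)
          linarith [hfc ▸ this]
        nlinarith [heq x hx]
      have hsm : StrictMonoOn dφ (Icc (-1:ℝ) 1) := by
        apply strictMonoOn_of_deriv_pos (convex_Icc _ _) hdφc
        intro x hx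
        rw [interior_Icc] at hx
        rw [(hdφ' x hx).deriv]
        exact hdd x hx
      have hd1 : 0 < dφ 1 := by
        have := hsm hx0I h1mem hx0.2
        rwa [hdx0] at this
      have hdm1 : dφ (-1) < 0 := by
        have := hsm hm1mem hx0I hx0.1
        rwa [hdx0] at this
      have hanti2 : AntitoneOn φ (Icc (-1:ℝ) x0) := by
        apply antitoneOn_of_deriv_nonpos (convex_Icc _ _)
          (hφc.mono (Icc_subset_Icc le_rfl hx0.2.le))
        · intro x hx
          rw [interior_Icc] at hx
          have hxI : x ∈ Ioo (-1:ℝ) 1 := ⟨hx.1, hx.2.trans hx0.2⟩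
          exact (hφ' x hxI).differentiableAt.differentiableWithinAt
        · intro x hx
          rw [interior_Icc] at hx
          have hxI : x ∈ Ioo (-1:ℝ) 1 := ⟨hx.1, hx.2.trans hx0.2⟩
          rw [(hφ' x hxI).deriv]
          have h10 : dφ x < dφ x0 := hsm (Ioo_subset_Icc_self hxI) hx0I hx.2
          rw [hdx0] at h10; exact h10.le
      have hmono2 : MonotoneOn φ (Icc x0 1) := by
        apply monotoneOn_of_deriv_nonneg (convex_Icc _ _)
          (hφc.mono (Icc_subset_Icc hx0.1.le le_rfl))
        · intro x hx
          rw [interior_Icc] at hx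
          have hxI : x ∈ Ioo (-1:ℝ) 1 := ⟨hx0.1.trans hx.1, hx.2⟩
          exact (hφ' x hxI).differentiableAt.differentiableWithinAt
        · intro x hx
          rw [interior_Icc] at hx
          have hxI : x ∈ Ioo (-1:ℝ) 1 := ⟨hx0.1.trans hx.1, hx.2⟩
          rw [(hφ' x hxI).deriv]
          have h10 : dφ x0 < dφ x := hsm hx0I (Ioo_subset_Icc_self hxI) hx.1
          rw [hdx0] at h10; exact h10.le
      have hφm1 : φ x0 ≤ φ (-1) :=
        hanti2 (left_mem_Icc.2 hx0.1.le) (right_mem_Icc.2 hx0.1.le) hx0.1.le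
      have hφ1 : φ x0 ≤ φ 1 :=
        hmono2 (left_mem_Icc.2 hx0.2.le) (right_mem_Icc.2 hx0.2.le) hx0.2.le
      constructor
      · rw [← hbc2]
        nlinarith [mul_nonneg hη (neg_nonneg.2 hdm1.le)]
      · rw [← hbc1]
        nlinarith [mul_nonneg hη hd1.le]
  -- key2 : if dφ has no zero then φ is strictly monotone and boundary data ordered accordingly
  have key2 : (∀ x ∈ Ioo (-1:ℝ) 1, dφ x ≠ 0) →
      (StrictMonoOn φ (Icc (-1:ℝ) 1) ∧ φ0m < φ0p) ∨
      (StrictAntiOn φ (Icc (-1:ℝ) 1) ∧ φ0p < φ0m) := by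
    intro hnz
    have h0mem : (0:ℝ) ∈ Ioo (-1:ℝ) 1 := by norm_num
    haveI hnb1 : (𝓝[Ioo (-1:ℝ) 1] (1:ℝ)).NeBot := right_nhdsWithin_Ioo_neBot (by norm_num)
    haveI hnbm1 : (𝓝[Ioo (-1:ℝ) 1] (-1:ℝ)).NeBot := left_nhdsWithin_Ioo_neBot (by norm_num)
    have ht1 : Tendsto dφ (𝓝[Ioo (-1:ℝ) 1] 1) (𝓝 (dφ 1)) :=
      (hdφc 1 h1mem).mono_left (nhdsWithin_mono _ Ioo_subset_Icc_self)
    have htm1 : Tendsto dφ (𝓝[Ioo (-1:ℝ) 1] (-1)) (𝓝 (dφ (-1))) :=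
      (hdφc (-1) hm1mem).mono_left (nhdsWithin_mono _ Ioo_subset_Icc_self)
    rcases (hnz 0 h0mem).lt_or_gt with hneg | hpos
    · right
      have hallneg : ∀ x ∈ Ioo (-1:ℝ) 1, dφ x < 0 := by
        intro x hx
        rcases (hnz x hx).lt_or_gt with h | h
        · exact h
        · exfalso
          have hsubI : uIcc x 0 ⊆ Ioo (-1:ℝ) 1 := ordConnected_Ioo.uIcc_subset hx h0mem
          have h0m : (0:ℝ) ∈ uIcc (dφ x) (dφ 0) := by
            rw [mem_uIcc]; right; exact ⟨hneg.le, h.le⟩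
          obtain ⟨z, hz, hz0⟩ :=
            intermediate_value_uIcc (hdφc.mono (hsubI.trans Ioo_subset_Icc_self)) h0m
          exact hnz z (hsubI hz) hz0
      have hsa : StrictAntiOn φ (Icc (-1:ℝ) 1) := by
        apply strictAntiOn_of_deriv_neg (convex_Icc _ _) hφc
        intro x hx
        rw [interior_Icc] at hx
        rw [(hφ' x hx).deriv]
        exact hallneg x hx
      have hd1 : dφ 1 ≤ 0 :=
        le_of_tendsto ht1 (eventually_nhdsWithin_of_forall (fun x hx => (hallneg x hx).le))
      have hdm1 : dφ (-1) ≤ 0 :=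
        le_of_tendsto htm1 (eventually_nhdsWithin_of_forall (fun x hx => (hallneg x hx).le))
      have hφlt : φ 1 < φ (-1) := hsa hm1mem h1mem (by norm_num)
      refine ⟨hsa, ?_⟩
      rw [← hbc1, ← hbc2]
      nlinarith [mul_nonneg hη (neg_nonneg.2 hd1), mul_nonneg hη (neg_nonneg.2 hdm1)]
    · left
      have hallpos : ∀ x ∈ Ioo (-1:ℝ) 1, 0 < dφ x := by
        intro x hx
        rcases (hnz x hx).lt_or_gt with h | h
        · exfalso
          have hsubI : uIcc x 0 ⊆ Ioo (-1:ℝ) 1 := ordConnected_Ioo.uIcc_subset hx h0mem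
          have h0m : (0:ℝ) ∈ uIcc (dφ x) (dφ 0) := by
            rw [mem_uIcc]; left; exact ⟨h.le, hpos.le⟩
          obtain ⟨z, hz, hz0⟩ :=
            intermediate_value_uIcc (hdφc.mono (hsubI.trans Ioo_subset_Icc_self)) h0m
          exact hnz z (hsubI hz) hz0
        · exact h
      have hsm : StrictMonoOn φ (Icc (-1:ℝ) 1) := by
        apply strictMonoOn_of_deriv_pos (convex_Icc _ _) hφc
        intro x hx
        rw [interior_Icc] at hx
        rw [(hφ' x hx).deriv]
        exact hallpos x hx
      have hd1 : 0 ≤ dφ 1 :=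
        ge_of_tendsto ht1 (eventually_nhdsWithin_of_forall (fun x hx => (hallpos x hx).le))
      have hdm1 : 0 ≤ dφ (-1) :=
        ge_of_tendsto htm1 (eventually_nhdsWithin_of_forall (fun x hx => (hallpos x hx).le))
      have hφlt : φ (-1) < φ 1 := hsm hm1mem h1mem (by norm_num)
      refine ⟨hsm, ?_⟩
      rw [← hbc1, ← hbc2]
      nlinarith [mul_nonneg hη hd1, mul_nonneg hη hdm1]
  constructor
  · intro hle1 hle2
    by_cases hz : ∃ x0 ∈ Ioo (-1:ℝ) 1, dφ x0 = 0
    · obtain ⟨x0, hx0, hd0⟩ := hz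
      rcases key x0 hx0 hd0 with ⟨ha, _⟩ | ⟨_, hb⟩
      · linarith
      · linarith
    · push_neg at hz
      rcases key2 hz with ⟨hsm, _⟩ | ⟨_, hlt'⟩
      · exact hsm.monotoneOn.mono Ioo_subset_Icc_self
      · linarith
  · intro hle1 hle2
    by_cases hz : ∃ x0 ∈ Ioo (-1:ℝ) 1, dφ x0 = 0
    · obtain ⟨x0, hx0, hd0⟩ := hz
      rcases key x0 hx0 hd0 with ⟨ha, _⟩ | ⟨_, hb⟩
      · linarith
      · linarith
    · push_neg at hz
      rcases key2 hz with ⟨_, hlt'⟩ | ⟨hsa, _⟩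
      · linarith
      · exact hsa.antitoneOn.mono Ioo_subset_Icc_self
end

section
/- Let φ be a nonconstant C² solution of ε φ''(x) = f(φ(x)) on (−1,1) with the Robin boundary conditions, where f satisfies (F1) or (F2) with zero c and the boundary data lie in the domain of f. Then for all x ∈ (−1,1): min{φ₀(−1), φ₀(1), c} ≤ φ(x) ≤ max{φ₀(−1), φ₀(1), c}. In particular, every value φ(x) lies in the original domain of f. -/
open Set Filter

/-- At a right-endpoint max on `Icc (-1) 1`, the one-sided derivative is nonneg. -/
lemma aux_right {g : ℝ → ℝ} {d : ℝ} (hd : HasDerivWithinAt g d (Icc (-1:ℝ) 1) 1)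
    (hmax : IsMaxOn g (Icc (-1:ℝ) 1) 1) : 0 ≤ d := by
  have hy : ((-1:ℝ) - 1) ∈ posTangentConeAt (Icc (-1:ℝ) 1) 1 :=
    sub_mem_posTangentConeAt_of_segment_subset
      ((convex_Icc (-1:ℝ) 1).segment_subset (by norm_num) (by norm_num))
  have h := hmax.localize.hasFDerivWithinAt_nonpos hd.hasFDerivWithinAt hy
  simp only [ContinuousLinearMap.toSpanSingleton_apply,
    smul_eq_mul] at h
  nlinarith

/-- At a left-endpoint max on `Icc (-1) 1`, the one-sided derivative is nonpos. -/
lemma aux_left {g : ℝ → ℝ} {d : ℝ} (hd : HasDerivWithinAt g d (Icc (-1:ℝ) 1) (-1))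
    (hmax : IsMaxOn g (Icc (-1:ℝ) 1) (-1)) : d ≤ 0 := by
  have hy : ((1:ℝ) - (-1)) ∈ posTangentConeAt (Icc (-1:ℝ) 1) (-1) :=
    sub_mem_posTangentConeAt_of_segment_subset
      ((convex_Icc (-1:ℝ) 1).segment_subset (by norm_num) (by norm_num))
  have h := hmax.localize.hasFDerivWithinAt_nonpos hd.hasFDerivWithinAt hy
  simp only [ContinuousLinearMap.toSpanSingleton_apply,
    smul_eq_mul] at h
  nlinarith

/-- At an interior max, the second derivative is nonpositive. -/
lemma aux_int (φ dφ ddφ : ℝ → ℝ)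
    (hreg1 : ∀ x ∈ Icc (-1:ℝ) 1, HasDerivWithinAt φ (dφ x) (Icc (-1:ℝ) 1) x)
    (hreg2 : ∀ x ∈ Icc (-1:ℝ) 1, HasDerivWithinAt dφ (ddφ x) (Icc (-1:ℝ) 1) x)
    (hreg3 : ContinuousOn ddφ (Icc (-1:ℝ) 1))
    {x₀ : ℝ} (hx₀ : x₀ ∈ Ioo (-1:ℝ) 1)
    (hmax : IsMaxOn φ (Icc (-1:ℝ) 1) x₀) : ddφ x₀ ≤ 0 := by
  by_contra hpos
  push_neg at hpos
  have hx₀' : x₀ ∈ Icc (-1:ℝ) 1 := Ioo_subset_Icc_self hx₀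
  have hIcc : Icc (-1:ℝ) 1 ∈ nhds x₀ := Icc_mem_nhds hx₀.1 hx₀.2
  -- first derivative vanishes
  have hd0 : dφ x₀ = 0 :=
    (hmax.isLocalMax hIcc).hasDerivAt_eq_zero ((hreg1 x₀ hx₀').hasDerivAt hIcc)
  -- second derivative positive near x₀
  have hcont : ContinuousAt ddφ x₀ := (hreg3 x₀ hx₀').continuousAt hIcc
  have hev : ∀ᶠ y in nhds x₀, 0 < ddφ y := hcont.eventually (eventually_gt_nhds hpos)
  obtain ⟨δ, hδ, hball⟩ := Metric.eventually_nhds_iff.mp hev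
  set a : ℝ := x₀ - min (δ/2) ((x₀+1)/2) with ha
  have hmin : 0 < min (δ/2) ((x₀+1)/2) :=
    lt_min (by linarith) (by linarith [hx₀.1])
  have hax : a < x₀ := sub_lt_self _ hmin
  have ham1 : -1 < a := by
    have h2 : min (δ/2) ((x₀+1)/2) ≤ (x₀+1)/2 := min_le_right _ _
    simp only [ha]; linarith
  have haI : a ∈ Icc (-1:ℝ) 1 := ⟨le_of_lt ham1, by linarith [hx₀.2, hax]⟩
  have hJsub : Icc a x₀ ⊆ Icc (-1:ℝ) 1 := Icc_subset_Icc haI.1 hx₀'.2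
  have hJint : interior (Icc a x₀) = Ioo a x₀ := interior_Icc
  have hJintsub : Ioo a x₀ ⊆ Icc (-1:ℝ) 1 := fun y hy =>
    hJsub (Ioo_subset_Icc_self hy)
  have hdist : ∀ y ∈ Ioo a x₀, dist y x₀ < δ := by
    intro y hy
    have h1 : min (δ/2) ((x₀+1)/2) ≤ δ/2 := min_le_left _ _
    rw [Real.dist_eq, abs_of_nonpos (by linarith [hy.2])]
    have := hy.1; simp only [ha] at this; linarith
  -- dφ strictly monotone on [a, x₀]
  have hdφmono : StrictMonoOn dφ (Icc a x₀) := by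
    apply strictMonoOn_of_hasDerivWithinAt_pos (convex_Icc a x₀)
      (fun y hy => ((hreg2 y (hJsub hy)).mono hJsub).continuousWithinAt)
      (f' := ddφ)
    · intro y hy
      rw [hJint] at hy ⊢
      exact (hreg2 y (hJintsub hy)).mono hJintsub
    · intro y hy
      rw [hJint] at hy
      exact hball (hdist y hy)
  have hdφneg : ∀ y ∈ Ioo a x₀, dφ y < 0 := fun y hy => by
    have := hdφmono (Ioo_subset_Icc_self hy) (right_mem_Icc.mpr hax.le) hy.2
    rwa [hd0] at this
  have hφanti : StrictAntiOn φ (Icc a x₀) :=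
    strictAntiOn_of_hasDerivWithinAt_neg (convex_Icc a x₀)
      (fun y hy => ((hreg1 y (hJsub hy)).mono hJsub).continuousWithinAt)
      (fun y hy => by rw [hJint] at hy ⊢; exact (hreg1 y (hJintsub hy)).mono hJintsub)
      (fun y hy => hdφneg y (hJint ▸ hy))
  have hlt := hφanti (left_mem_Icc.mpr hax.le) (right_mem_Icc.mpr hax.le) hax
  exact absurd (hmax haI) (not_le.mpr hlt)

/-- Lemma, part (v): for a nonconstant C² solution φ of ε φ'' = f(φ)
on (−1,1) with Robin boundary conditions, where f satisfies (F1) or (F2) with zero c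
and the boundary data lie in the domain of f:
min{φ₀(−1), φ₀(1), c} ≤ φ(x) ≤ max{φ₀(−1), φ₀(1), c} for all x ∈ (−1,1); in
particular every value φ(x) lies in the domain of f. -/
theorem stmt_16
    (f : ℝ → ℝ) (dom : Set ℝ) (c : ℝ)
    (hmono : StrictMonoOn f dom) (hsmooth : ContDiffOn ℝ (⊤ : ℕ∞) f dom)
    (hc : c ∈ interior dom) (hfc : f c = 0)
    (hdom : (∃ A M : ℝ, A < 0 ∧ 0 < M ∧ dom = Icc A M ∧ f A < 0 ∧ 0 < f M) ∨
            (∃ A : ℝ, A < 0 ∧ dom = Ici A ∧ f A < 0 ∧ ∃ y ∈ dom, 0 < f y) ∨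
            (∃ B : ℝ, 0 < B ∧ dom = Iic B ∧ 0 < f B ∧ ∃ y ∈ dom, f y < 0))
    (ε η φ0m φ0p : ℝ) (hε : 0 < ε) (hη : 0 ≤ η)
    (hbm : φ0m ∈ dom) (hbp : φ0p ∈ dom)
    (φ dφ ddφ : ℝ → ℝ)
    (hreg1 : ∀ x ∈ Icc (-1:ℝ) 1, HasDerivWithinAt φ (dφ x) (Icc (-1:ℝ) 1) x)
    (hreg2 : ∀ x ∈ Icc (-1:ℝ) 1, HasDerivWithinAt dφ (ddφ x) (Icc (-1:ℝ) 1) x)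
    (hreg3 : ContinuousOn ddφ (Icc (-1:ℝ) 1))
    (hval : ∀ x ∈ Icc (-1:ℝ) 1, φ x ∈ dom)
    (heq : ∀ x ∈ Ioo (-1:ℝ) 1, ε * ddφ x = f (φ x))
    (hbc1 : φ 1 + η * dφ 1 = φ0p)
    (hbc2 : φ (-1) - η * dφ (-1) = φ0m)
    (hnc : ∃ x ∈ Icc (-1:ℝ) 1, ∃ y ∈ Icc (-1:ℝ) 1, φ x ≠ φ y) :
    ∀ x ∈ Ioo (-1:ℝ) 1,
      min (min φ0m φ0p) c ≤ φ x ∧ φ x ≤ max (max φ0m φ0p) c ∧ φ x ∈ dom := by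
  have hφcont : ContinuousOn φ (Icc (-1:ℝ) 1) := fun x hx => (hreg1 x hx).continuousWithinAt
  have hcd : c ∈ dom := interior_subset hc
  obtain ⟨x₀, hx₀, hmax⟩ := isCompact_Icc.exists_isMaxOn (nonempty_Icc.mpr (by norm_num)) hφcont
  obtain ⟨x₁, hx₁, hmin⟩ := isCompact_Icc.exists_isMinOn (nonempty_Icc.mpr (by norm_num)) hφcont
  have hub : φ x₀ ≤ max (max φ0m φ0p) c := by
    rcases eq_or_lt_of_le hx₀.1 with h1 | h1
    · subst h1
      have hd : dφ (-1) ≤ 0 := aux_left (hreg1 (-1) hx₀) hmax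
      have h : φ (-1) ≤ φ0m := by nlinarith
      exact h.trans (le_max_of_le_left (le_max_left _ _))
    rcases eq_or_lt_of_le hx₀.2 with h2 | h2
    · subst h2
      have hd : 0 ≤ dφ 1 := aux_right (hreg1 1 hx₀) hmax
      have h : φ 1 ≤ φ0p := by nlinarith
      exact h.trans (le_max_of_le_left (le_max_right _ _))
    · have hdd : ddφ x₀ ≤ 0 := aux_int φ dφ ddφ hreg1 hreg2 hreg3 ⟨h1, h2⟩ hmax
      have hfle : f (φ x₀) ≤ 0 := by
        have := heq x₀ ⟨h1, h2⟩; nlinarith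
      have h : φ x₀ ≤ c := by
        by_contra h; push_neg at h
        have := hmono hcd (hval x₀ hx₀) h
        rw [hfc] at this; linarith
      exact h.trans (le_max_right _ _)
  have hlb : min (min φ0m φ0p) c ≤ φ x₁ := by
    rcases eq_or_lt_of_le hx₁.1 with h1 | h1
    · subst h1
      have hd : -dφ (-1) ≤ 0 := aux_left ((hreg1 (-1) hx₁).neg) (fun y hy => by
        simp only [Set.mem_setOf_eq, Pi.neg_apply, neg_le_neg_iff]
        exact hmin hy)
      have h : φ0m ≤ φ (-1) := by nlinarith
      exact le_trans (min_le_of_left_le (min_le_left _ _)) h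
    rcases eq_or_lt_of_le hx₁.2 with h2 | h2
    · subst h2
      have hd : 0 ≤ -dφ 1 := aux_right ((hreg1 1 hx₁).neg) (fun y hy => by
        simp only [Set.mem_setOf_eq, Pi.neg_apply, neg_le_neg_iff]
        exact hmin hy)
      have h : φ0p ≤ φ 1 := by nlinarith
      exact le_trans (min_le_of_left_le (min_le_right _ _)) h
    · have hdd : -ddφ x₁ ≤ 0 := by
        apply aux_int (fun y => -φ y) (fun y => -dφ y) (fun y => -ddφ y)
          (fun y hy => (hreg1 y hy).neg) (fun y hy => (hreg2 y hy).neg) hreg3.neg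
          ⟨h1, h2⟩
        intro y hy
        simp only [Set.mem_setOf_eq, neg_le_neg_iff]
        exact hmin hy
      have hfge : 0 ≤ f (φ x₁) := by
        have := heq x₁ ⟨h1, h2⟩; nlinarith
      have h : c ≤ φ x₁ := by
        by_contra h; push_neg at h
        have := hmono (hval x₁ hx₁) hcd h
        rw [hfc] at this; linarith
      exact le_trans (min_le_right _ _) h
  intro x hx
  have hxI : x ∈ Icc (-1:ℝ) 1 := Ioo_subset_Icc_self hx
  exact ⟨le_trans hlb (hmin hxI), le_trans (hmax hxI) hub, hval x hxI⟩
end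

section
/- Let φ = φ_ε be a nonconstant C² solution of ε φ''(x) = f(φ(x)) on (−1,1) with the Robin boundary conditions, where f satisfies (F1) or (F2) with zero c and the boundary data lie in the domain of f. Set A₂ := max{|φ₀(−1) − c|, |φ₀(1) − c|} and α₀ := min of f' over the interval [min{φ₀(−1), φ₀(1), c}, max{φ₀(−1), φ₀(1), c}] (a positive constant). Then for all x ∈ (−1,1), (φ(x) − c)² ≤ A₂² ( e^{−(1+x)√(2α₀/ε)} + e^{−(1−x)√(2α₀/ε)} ); consequently φ_ε(x) → c as ε → 0⁺ for every fixed x ∈ (−1,1). -/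
open Set Filter Topology

lemma deriv_nonneg_right {g : ℝ → ℝ} {d a b : ℝ} (hab : a < b)
    (hd : HasDerivWithinAt g d (Icc a b) b)
    (hmax : ∀ x ∈ Icc a b, g x ≤ g b) : 0 ≤ d := by
  have h := hasDerivWithinAt_iff_tendsto_slope.mp hd
  rw [Icc_sdiff_right] at h
  have hne : (𝓝[Ico a b] b).NeBot := by
    rw [nhdsWithin_Ico_eq_nhdsLT hab]; infer_instance
  refine ge_of_tendsto h ?_
  filter_upwards [eventually_mem_nhdsWithin] with x hx
  have h1 : g x - g b ≤ 0 := sub_nonpos.mpr (hmax x (Ico_subset_Icc_self hx))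
  have h2 : x - b < 0 := sub_neg.mpr hx.2
  simpa [slope_def_field, div_nonneg_iff] using
    Or.inr ⟨sub_nonpos.mp h1, sub_nonpos.mp h2.le⟩

lemma deriv_nonpos_left {g : ℝ → ℝ} {d a b : ℝ} (hab : a < b)
    (hd : HasDerivWithinAt g d (Icc a b) a)
    (hmax : ∀ x ∈ Icc a b, g x ≤ g a) : d ≤ 0 := by
  have h := hasDerivWithinAt_iff_tendsto_slope.mp hd
  rw [Icc_diff_left] at h
  have hne : (𝓝[Ioc a b] a).NeBot := by
    rw [nhdsWithin_Ioc_eq_nhdsGT hab]; infer_instance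
  refine le_of_tendsto h ?_
  filter_upwards [eventually_mem_nhdsWithin] with x hx
  have h1 : g x - g a ≤ 0 := sub_nonpos.mpr (hmax x (Ioc_subset_Icc_self hx))
  have h2 : 0 < x - a := sub_pos.mpr hx.1
  simpa [slope_def_field, div_nonpos_iff] using Or.inr ⟨sub_nonpos.mp h1, sub_nonneg.mp h2.le⟩

lemma no_interior_max {g dg ddg : ℝ → ℝ} {x₀ : ℝ}
    (hx₀ : x₀ ∈ Ioo (-1:ℝ) 1)
    (hg : ∀ x ∈ Ioo (-1:ℝ) 1, HasDerivAt g (dg x) x)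
    (hdg : ∀ x ∈ Ioo (-1:ℝ) 1, HasDerivAt dg (ddg x) x)
    (hcont : ContinuousOn ddg (Ioo (-1:ℝ) 1))
    (hpos : 0 < ddg x₀)
    (hmax : ∀ x ∈ Ioo (-1:ℝ) 1, g x ≤ g x₀) : False := by
  have hopen : IsOpen (Ioo (-1:ℝ) 1) := isOpen_Ioo
  have hca : ContinuousAt ddg x₀ :=
    (hcont.continuousAt (hopen.mem_nhds hx₀))
  have h1 : ∀ᶠ y in 𝓝 x₀, 0 < ddg y := hca.eventually (eventually_gt_nhds hpos)
  have h2 : ∀ᶠ y in 𝓝 x₀, y ∈ Ioo (-1:ℝ) 1 := hopen.eventually_mem hx₀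
  obtain ⟨δ, hδpos, hδ⟩ := Metric.eventually_nhds_iff_ball.mp (h1.and h2)
  set a := x₀ - δ/2
  set b := x₀ + δ/2
  have hsub : Icc a b ⊆ Metric.ball x₀ δ := by
    intro y hy
    rw [Metric.mem_ball, Real.dist_eq, abs_sub_lt_iff]
    constructor <;> [skip; skip] <;>
      simp only [a, b] at hy ⊢ <;> cases' hy with h1 h2 <;> linarith
  have hsub' : Icc a b ⊆ Ioo (-1:ℝ) 1 := fun y hy => (hδ y (hsub hy)).2
  have hconv : StrictConvexOn ℝ (Icc a b) g := by
    apply strictConvexOn_of_deriv2_pos (convex_Icc a b)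
    · exact fun y hy => ((hg y (hsub' hy)).differentiableAt.continuousAt).continuousWithinAt
    · intro y hy
      rw [interior_Icc] at hy
      have hyI : y ∈ Ioo (-1:ℝ) 1 := hsub' (Ioo_subset_Icc_self hy)
      have hEq : deriv g =ᶠ[𝓝 y] dg := by
        filter_upwards [hopen.eventually_mem hyI] with z hz
        exact (hg z hz).deriv
      have : deriv (deriv g) y = ddg y := by
        rw [Filter.EventuallyEq.deriv_eq hEq]
        exact (hdg y hyI).deriv
      simpa [Function.iterate_succ, this] using (hδ y (hsub (Ioo_subset_Icc_self hy))).1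
  have hab : a < b := by simp only [a, b]; linarith
  have haI : a ∈ Icc a b := ⟨le_refl a, hab.le⟩
  have hbI : b ∈ Icc a b := ⟨hab.le, le_refl b⟩
  have hx₀eq : x₀ = (1/2 : ℝ) • a + (1/2 : ℝ) • b := by simp only [a, b, smul_eq_mul]; ring
  have := hconv.2 haI hbI hab.ne (by norm_num : (0:ℝ) < 1/2) (by norm_num : (0:ℝ) < 1/2)
    (by norm_num)
  rw [← hx₀eq] at this
  have hga := hmax a (hsub' haI)
  have hgb := hmax b (hsub' hbI)
  simp only [smul_eq_mul] at this
  linarith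

lemma max_principle {g dg ddg : ℝ → ℝ} {K : ℝ}
    (hg : ∀ x ∈ Icc (-1:ℝ) 1, HasDerivWithinAt g (dg x) (Icc (-1:ℝ) 1) x)
    (hdg : ∀ x ∈ Icc (-1:ℝ) 1, HasDerivWithinAt dg (ddg x) (Icc (-1:ℝ) 1) x)
    (hcont : ContinuousOn ddg (Icc (-1:ℝ) 1))
    (hpos : ∀ x ∈ Ioo (-1:ℝ) 1, K < g x → 0 < ddg x)
    (hbp : 0 ≤ dg 1 → g 1 ≤ K)
    (hbm : dg (-1) ≤ 0 → g (-1) ≤ K) :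
    ∀ x ∈ Icc (-1:ℝ) 1, g x ≤ K := by
  have hgc : ContinuousOn g (Icc (-1:ℝ) 1) := fun x hx => (hg x hx).continuousWithinAt
  obtain ⟨x₀, hx₀, hmax⟩ := isCompact_Icc.exists_isMaxOn (by norm_num : (Icc (-1:ℝ) 1).Nonempty) hgc
  have hmax' : ∀ x ∈ Icc (-1:ℝ) 1, g x ≤ g x₀ := fun x hx => hmax hx
  suffices h : g x₀ ≤ K by exact fun x hx => le_trans (hmax' x hx) h
  rcases eq_or_lt_of_le hx₀.1 with h1 | h1
  · subst h1
    exact hbm (deriv_nonpos_left (by norm_num) (hg _ hx₀) hmax')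
  rcases eq_or_lt_of_le hx₀.2 with h2 | h2
  · rw [h2] at hx₀ hmax' ⊢
    exact hbp (deriv_nonneg_right (by norm_num) (hg _ hx₀) hmax')
  by_contra hK
  push_neg at hK
  have hx₀I : x₀ ∈ Ioo (-1:ℝ) 1 := ⟨h1, h2⟩
  have hIoo : Ioo (-1:ℝ) 1 ⊆ Icc (-1:ℝ) 1 := Ioo_subset_Icc_self
  refine no_interior_max hx₀I
    (fun x hx => (hg x (hIoo hx)).hasDerivAt (Icc_mem_nhds hx.1 hx.2))
    (fun x hx => (hdg x (hIoo hx)).hasDerivAt (Icc_mem_nhds hx.1 hx.2))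
    (hcont.mono hIoo) (hpos x₀ hx₀I hK) (fun x hx => hmax' x (hIoo hx))

lemma key_ineq {f : ℝ → ℝ} {dom : Set ℝ} {c m M' α₀ : ℝ}
    (hsmooth : ContDiffOn ℝ (⊤ : ℕ∞) f dom)
    (hfc : f c = 0)
    (hJ : Icc m M' ⊆ dom)
    (hint : Ioo m M' ⊆ interior dom)
    (hcJ : c ∈ Icc m M')
    (hlb : ∀ t ∈ Icc m M', α₀ ≤ derivWithin f dom t) :
    ∀ t ∈ Icc m M', α₀ * (t - c)^2 ≤ (t - c) * f t := by
  have hdiffOn : DifferentiableOn ℝ f dom := hsmooth.differentiableOn (by simp)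
  set g : ℝ → ℝ := fun t => f t - α₀ * (t - c) with hg
  have hda : ∀ y ∈ Ioo m M', DifferentiableAt ℝ f y := fun y hy =>
    (hdiffOn y (interior_subset (hint hy))).differentiableAt
      (mem_interior_iff_mem_nhds.mp (hint hy))
  have hmono : MonotoneOn g (Icc m M') := by
    apply monotoneOn_of_deriv_nonneg (convex_Icc m M')
    · exact ((hsmooth.continuousOn).mono hJ).sub (by fun_prop)
    · rw [interior_Icc]
      intro y hy
      exact ((hda y hy).sub (by fun_prop)).differentiableWithinAt
    · rw [interior_Icc]
      intro y hy
      have hgd : HasDerivAt g (deriv f y - α₀) y := by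
        have h2 : HasDerivAt (fun t => α₀ * (t - c)) (α₀ * 1) y :=
          ((hasDerivAt_id y).sub_const c).const_mul α₀
        have h3 := (hda y hy).hasDerivAt.sub h2
        rw [mul_one] at h3
        exact h3
      rw [hgd.deriv]
      have heq : derivWithin f dom y = deriv f y :=
        derivWithin_of_mem_nhds (mem_interior_iff_mem_nhds.mp (hint hy))
      have hle := hlb y (Ioo_subset_Icc_self hy)
      rw [heq] at hle
      linarith
  intro t ht
  rcases le_total c t with h | h
  · have := hmono hcJ ht h
    simp only [hg, hfc, zero_sub, sub_self, mul_zero] at this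
    nlinarith [this, sub_nonneg.mpr h]
  · have := hmono ht hcJ h
    simp only [hg, hfc, zero_sub, sub_self, mul_zero] at this
    nlinarith [this, sub_nonpos.mpr h]

lemma sqrt_tendsto_atTop : Tendsto Real.sqrt atTop atTop := by
  apply tendsto_atTop_atTop.mpr
  intro b
  exact ⟨b^2, fun a ha => le_trans (le_abs_self b)
    (by rw [← Real.sqrt_sq_eq_abs]; exact Real.sqrt_le_sqrt ha)⟩

/-- Lemma, part (vi): for a family φ_ε of nonconstant C² solutions of
ε φ'' = f(φ) on (−1,1) with Robin boundary conditions (f satisfying (F1) or (F2)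
with zero c, boundary data in the domain of f), with
A₂ := max{|φ₀(−1) − c|, |φ₀(1) − c|} and α₀ := min of f' over
[min{φ₀(−1),φ₀(1),c}, max{φ₀(−1),φ₀(1),c}] (a positive constant), one has for every
x ∈ (−1,1): (φ_ε(x) − c)² ≤ A₂²(e^{−(1+x)√(2α₀/ε)} + e^{−(1−x)√(2α₀/ε)}), and
consequently φ_ε(x) → c as ε → 0⁺ for every fixed x ∈ (−1,1). -/
theorem stmt_17
    (f : ℝ → ℝ) (dom : Set ℝ) (c : ℝ)
    (hmono : StrictMonoOn f dom) (hsmooth : ContDiffOn ℝ (⊤ : ℕ∞) f dom)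
    (hc : c ∈ interior dom) (hfc : f c = 0)
    (hdom : (∃ A M : ℝ, A < 0 ∧ 0 < M ∧ dom = Icc A M ∧ f A < 0 ∧ 0 < f M) ∨
            (∃ A : ℝ, A < 0 ∧ dom = Ici A ∧ f A < 0 ∧ ∃ y ∈ dom, 0 < f y) ∨
            (∃ B : ℝ, 0 < B ∧ dom = Iic B ∧ 0 < f B ∧ ∃ y ∈ dom, f y < 0))
    (φ0m φ0p : ℝ) (hbm : φ0m ∈ dom) (hbp : φ0p ∈ dom)
    (η : ℝ → ℝ) (hη : ∀ ε : ℝ, 0 < ε → 0 ≤ η ε)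
    (Φ dΦ ddΦ : ℝ → ℝ → ℝ)
    (hsol : ∀ ε : ℝ, 0 < ε →
      (∀ x ∈ Icc (-1:ℝ) 1, HasDerivWithinAt (Φ ε) (dΦ ε x) (Icc (-1:ℝ) 1) x) ∧
      (∀ x ∈ Icc (-1:ℝ) 1, HasDerivWithinAt (dΦ ε) (ddΦ ε x) (Icc (-1:ℝ) 1) x) ∧
      ContinuousOn (ddΦ ε) (Icc (-1:ℝ) 1) ∧
      (∀ x ∈ Icc (-1:ℝ) 1, Φ ε x ∈ dom) ∧
      (∀ x ∈ Ioo (-1:ℝ) 1, ε * ddΦ ε x = f (Φ ε x)) ∧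
      Φ ε 1 + η ε * dΦ ε 1 = φ0p ∧
      Φ ε (-1) - η ε * dΦ ε (-1) = φ0m ∧
      (∃ x ∈ Icc (-1:ℝ) 1, ∃ y ∈ Icc (-1:ℝ) 1, Φ ε x ≠ Φ ε y))
    (A₂ α₀ : ℝ)
    (hA₂ : A₂ = max |φ0m - c| |φ0p - c|)
    (hα₀ : IsLeast ((fun t => derivWithin f dom t) ''
      Icc (min (min φ0m φ0p) c) (max (max φ0m φ0p) c)) α₀)
    (hα₀pos : 0 < α₀) :
    (∀ ε : ℝ, 0 < ε → ∀ x ∈ Ioo (-1:ℝ) 1,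
      (Φ ε x - c) ^ 2 ≤ A₂ ^ 2 *
        (Real.exp (-(1 + x) * Real.sqrt (2 * α₀ / ε)) +
         Real.exp (-(1 - x) * Real.sqrt (2 * α₀ / ε)))) ∧
    ∀ x ∈ Ioo (-1:ℝ) 1,
      Tendsto (fun ε => Φ ε x) (nhdsWithin 0 (Ioi 0)) (nhds c) := by
  have hcd : c ∈ dom := interior_subset hc
  set m : ℝ := min (min φ0m φ0p) c with hm_def
  set M' : ℝ := max (max φ0m φ0p) c with hM'_def
  have hminmem : min φ0m φ0p ∈ dom := by
    rcases le_total φ0m φ0p with h | h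
    · rwa [min_eq_left h]
    · rwa [min_eq_right h]
  have hmaxmem : max φ0m φ0p ∈ dom := by
    rcases le_total φ0m φ0p with h | h
    · rwa [max_eq_right h]
    · rwa [max_eq_left h]
  have hmmem : m ∈ dom := by
    rcases le_total (min φ0m φ0p) c with h | h
    · rw [hm_def, min_eq_left h]; exact hminmem
    · rw [hm_def, min_eq_right h]; exact hcd
  have hM'mem : M' ∈ dom := by
    rcases le_total (max φ0m φ0p) c with h | h
    · rw [hM'_def, max_eq_right h]; exact hcd
    · rw [hM'_def, max_eq_left h]; exact hmaxmem
  have hJdom : Icc m M' ⊆ dom := by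
    rcases hdom with ⟨A, M, _, _, hd, _, _⟩ | ⟨A, _, hd, _, _⟩ | ⟨B, _, hd, _, _⟩ <;> subst hd
    · exact Set.ordConnected_Icc.out hmmem hM'mem
    · exact Set.ordConnected_Ici.out hmmem hM'mem
    · exact Set.ordConnected_Iic.out hmmem hM'mem
  have hJint : Ioo m M' ⊆ interior dom := by
    rcases hdom with ⟨A, M, _, _, hd, _, _⟩ | ⟨A, _, hd, _, _⟩ | ⟨B, _, hd, _, _⟩ <;> subst hd
    · rw [interior_Icc]
      exact fun x hx => ⟨lt_of_le_of_lt hmmem.1 hx.1, lt_of_lt_of_le hx.2 hM'mem.2⟩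
    · rw [interior_Ici]
      exact fun x hx => lt_of_le_of_lt hmmem hx.1
    · rw [interior_Iic]
      exact fun x hx => lt_of_lt_of_le hx.2 hM'mem
  have hcJ : c ∈ Icc m M' := ⟨min_le_right _ _, le_max_right _ _⟩
  have hmc : m ≤ c := hcJ.1
  have hcM' : c ≤ M' := hcJ.2
  have hlb : ∀ t ∈ Icc m M', α₀ ≤ derivWithin f dom t := fun t ht => hα₀.2 ⟨t, ht, rfl⟩
  have keyineq := key_ineq hsmooth hfc hJdom hJint hcJ hlb
  have hA₂nonneg : 0 ≤ A₂ := by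
    rw [hA₂]; exact le_trans (abs_nonneg _) (le_max_left _ _)
  have hMc : M' - c ≤ A₂ := by
    rw [hA₂, hM'_def]
    have h1 := le_abs_self (φ0m - c)
    have h2 := le_abs_self (φ0p - c)
    have h3 : (0:ℝ) ≤ max |φ0m - c| |φ0p - c| := le_trans (abs_nonneg _) (le_max_left _ _)
    have h4 := le_max_left |φ0m - c| |φ0p - c|
    have h5 := le_max_right |φ0m - c| |φ0p - c|
    rcases max_cases (max φ0m φ0p) c with ⟨h, _⟩ | ⟨h, _⟩ <;> rw [h]
    · rcases max_cases φ0m φ0p with ⟨h', _⟩ | ⟨h', _⟩ <;> rw [h'] <;> linarith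
    · linarith
  have hcm : c - m ≤ A₂ := by
    rw [hA₂, hm_def]
    have h1 := neg_abs_le (φ0m - c)
    have h2 := neg_abs_le (φ0p - c)
    have h3 : (0:ℝ) ≤ max |φ0m - c| |φ0p - c| := le_trans (abs_nonneg _) (le_max_left _ _)
    have h4 := le_max_left |φ0m - c| |φ0p - c|
    have h5 := le_max_right |φ0m - c| |φ0p - c|
    rcases min_cases (min φ0m φ0p) c with ⟨h, _⟩ | ⟨h, _⟩ <;> rw [h]
    · rcases min_cases φ0m φ0p with ⟨h', _⟩ | ⟨h', _⟩ <;> rw [h'] <;> linarith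
    · linarith
  -- the main bound
  have hbound : ∀ ε : ℝ, 0 < ε → ∀ x ∈ Ioo (-1:ℝ) 1,
      (Φ ε x - c) ^ 2 ≤ A₂ ^ 2 *
        (Real.exp (-(1 + x) * Real.sqrt (2 * α₀ / ε)) +
         Real.exp (-(1 - x) * Real.sqrt (2 * α₀ / ε))) := by
    intro ε hε
    obtain ⟨hΦ', hdΦ', hddc, hdomΦ, hode, hrp, hrm, -⟩ := hsol ε hε
    -- upper bound Φ ≤ M'
    have hupper : ∀ x ∈ Icc (-1:ℝ) 1, Φ ε x ≤ M' := by
      apply max_principle hΦ' hdΦ' hddc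
      · intro x hx hgt
        have hmem := hdomΦ x (Ioo_subset_Icc_self hx)
        have hflt : 0 < f (Φ ε x) := by
          rw [← hfc]; exact hmono hcd hmem (lt_of_le_of_lt hcM' hgt)
        have hprod : 0 < ε * ddΦ ε x := by rw [hode x hx]; exact hflt
        rcases mul_pos_iff.mp hprod with ⟨_, h⟩ | ⟨h, _⟩
        · exact h
        · linarith
      · intro hd
        have h1 : 0 ≤ η ε * dΦ ε 1 := mul_nonneg (hη ε hε) hd
        have h2 : φ0p ≤ M' := le_trans (le_max_right φ0m φ0p) (le_max_left _ _)
        linarith [hrp]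
      · intro hd
        have h1 : η ε * dΦ ε (-1) ≤ 0 := mul_nonpos_of_nonneg_of_nonpos (hη ε hε) hd
        have h2 : φ0m ≤ M' := le_trans (le_max_left φ0m φ0p) (le_max_left _ _)
        linarith [hrm]
    -- lower bound m ≤ Φ
    have hlower : ∀ x ∈ Icc (-1:ℝ) 1, m ≤ Φ ε x := by
      have := max_principle (g := fun x => -Φ ε x) (dg := fun x => -dΦ ε x)
        (ddg := fun x => -ddΦ ε x) (K := -m)
        (fun x hx => (hΦ' x hx).neg) (fun x hx => (hdΦ' x hx).neg) hddc.neg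
        ?_ ?_ ?_
      · intro x hx
        have := this x hx
        linarith
      · intro x hx hgt
        have hmem := hdomΦ x (Ioo_subset_Icc_self hx)
        have hΦlt : Φ ε x < m := by linarith
        have hflt : f (Φ ε x) < 0 := by
          rw [← hfc]; exact hmono hmem hcd (lt_of_lt_of_le hΦlt hmc)
        have hprod : ε * ddΦ ε x < 0 := by rw [hode x hx]; exact hflt
        rcases mul_neg_iff.mp hprod with ⟨_, h⟩ | ⟨h, _⟩
        · linarith
        · linarith
      · intro hd
        have hd' : dΦ ε 1 ≤ 0 := by linarith
        have h1 : η ε * dΦ ε 1 ≤ 0 := mul_nonpos_of_nonneg_of_nonpos (hη ε hε) hd'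
        have h2 : m ≤ φ0p := le_trans (min_le_left _ _) (min_le_right φ0m φ0p)
        linarith [hrp]
      · intro hd
        have hd' : 0 ≤ dΦ ε (-1) := by linarith
        have h1 : 0 ≤ η ε * dΦ ε (-1) := mul_nonneg (hη ε hε) hd'
        have h2 : m ≤ φ0m := le_trans (min_le_left _ _) (min_le_left φ0m φ0p)
        linarith [hrm]
    -- comparison function
    set μ : ℝ := Real.sqrt (2 * α₀ / ε) with hμ_def
    have hratpos : 0 < 2 * α₀ / ε := by positivity
    have hμsq : μ ^ 2 = 2 * α₀ / ε := Real.sq_sqrt hratpos.le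
    have hεμ : ε * μ ^ 2 = 2 * α₀ := by rw [hμsq]; field_simp
    set E1 : ℝ → ℝ := fun x => Real.exp (-(1 + x) * μ) with hE1_def
    set E2 : ℝ → ℝ := fun x => Real.exp (-(1 - x) * μ) with hE2_def
    have hE1d : ∀ x : ℝ, HasDerivAt E1 (E1 x * (-μ)) x := by
      intro x
      have h : HasDerivAt (fun x : ℝ => -(1 + x) * μ) (-μ) x := by
        simpa using (((hasDerivAt_id x).const_add (1:ℝ)).neg.mul_const μ)
      exact h.exp
    have hE2d : ∀ x : ℝ, HasDerivAt E2 (E2 x * μ) x := by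
      intro x
      have h : HasDerivAt (fun x : ℝ => -(1 - x) * μ) μ x := by
        simpa using (((hasDerivAt_id x).const_sub (1:ℝ)).neg.mul_const μ)
      exact h.exp
    set v : ℝ → ℝ := fun x => (Φ ε x - c) ^ 2 - A₂ ^ 2 * (E1 x + E2 x) with hv_def
    set dv : ℝ → ℝ := fun x =>
      2 * ((Φ ε x - c) * dΦ ε x) - A₂ ^ 2 * (E1 x * (-μ) + E2 x * μ) with hdv_def
    set ddv : ℝ → ℝ := fun x => 2 * (dΦ ε x) ^ 2 + 2 * (Φ ε x - c) * ddΦ ε x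
      - A₂ ^ 2 * (E1 x * μ ^ 2 + E2 x * μ ^ 2) with hddv_def
    have hvd : ∀ x ∈ Icc (-1:ℝ) 1, HasDerivWithinAt v (dv x) (Icc (-1:ℝ) 1) x := by
      intro x hx
      have h1 : HasDerivWithinAt (fun y => (Φ ε y - c) ^ 2)
          ((2:ℕ) * (Φ ε x - c) ^ 1 * dΦ ε x) (Icc (-1:ℝ) 1) x :=
        ((hΦ' x hx).sub_const c).pow 2
      have h2 : HasDerivAt (fun y => A₂ ^ 2 * (E1 y + E2 y))
          (A₂ ^ 2 * (E1 x * (-μ) + E2 x * μ)) x :=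
        ((hE1d x).add (hE2d x)).const_mul (A₂ ^ 2)
      have h3 : dv x = ((2:ℕ):ℝ) * (Φ ε x - c) ^ 1 * dΦ ε x
          - A₂ ^ 2 * (E1 x * (-μ) + E2 x * μ) := by
        simp only [hdv_def]; push_cast; ring
      rw [h3]
      exact h1.sub h2.hasDerivWithinAt
    have hdvd : ∀ x ∈ Icc (-1:ℝ) 1, HasDerivWithinAt dv (ddv x) (Icc (-1:ℝ) 1) x := by
      intro x hx
      have h1 : HasDerivWithinAt (fun y => (Φ ε y - c) * dΦ ε y)
          (dΦ ε x * dΦ ε x + (Φ ε x - c) * ddΦ ε x) (Icc (-1:ℝ) 1) x :=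
        ((hΦ' x hx).sub_const c).mul (hdΦ' x hx)
      have h1' := h1.const_mul (2:ℝ)
      have h2 : HasDerivAt (fun y => A₂ ^ 2 * (E1 y * (-μ) + E2 y * μ))
          (A₂ ^ 2 * ((E1 x * (-μ)) * (-μ) + (E2 x * μ) * μ)) x :=
        (((hE1d x).mul_const (-μ)).add ((hE2d x).mul_const μ)).const_mul (A₂ ^ 2)
      have h3 : ddv x = 2 * (dΦ ε x * dΦ ε x + (Φ ε x - c) * ddΦ ε x)
          - A₂ ^ 2 * ((E1 x * (-μ)) * (-μ) + (E2 x * μ) * μ) := by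
        simp only [hddv_def]; ring
      rw [h3]
      exact h1'.sub h2.hasDerivWithinAt
    have hddvc : ContinuousOn ddv (Icc (-1:ℝ) 1) := by
      have hΦc : ContinuousOn (Φ ε) (Icc (-1:ℝ) 1) := fun x hx => (hΦ' x hx).continuousWithinAt
      have hdΦc : ContinuousOn (dΦ ε) (Icc (-1:ℝ) 1) := fun x hx => (hdΦ' x hx).continuousWithinAt
      have hE1c : Continuous E1 := by fun_prop
      have hE2c : Continuous E2 := by fun_prop
      apply ContinuousOn.sub
      · exact ((continuousOn_const.mul (hdΦc.pow 2)).add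
          ((continuousOn_const.mul (hΦc.sub continuousOn_const)).mul hddc))
      · exact continuousOn_const.mul
          (((hE1c.continuousOn.mul continuousOn_const)).add
            (hE2c.continuousOn.mul continuousOn_const))
    have hvle : ∀ x ∈ Icc (-1:ℝ) 1, v x ≤ 0 := by
      apply max_principle hvd hdvd hddvc
      · intro x hx hv0
        have hmem : Φ ε x ∈ Icc m M' :=
          ⟨hlower x (Ioo_subset_Icc_self hx), hupper x (Ioo_subset_Icc_self hx)⟩
        have key := keyineq (Φ ε x) hmem
        have hodex := hode x hx
        have hεddv : ε * ddv x = 2 * ε * (dΦ ε x) ^ 2 + 2 * ((Φ ε x - c) * f (Φ ε x))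
            - 2 * α₀ * (A₂ ^ 2 * (E1 x + E2 x)) := by
          rw [hddv_def]
          simp only
          rw [← hodex, ← hεμ]
          ring
        have hpos' : 0 < ε * ddv x := by
          rw [hεddv]
          have hv0' : 0 < (Φ ε x - c) ^ 2 - A₂ ^ 2 * (E1 x + E2 x) := hv0
          nlinarith [mul_pos hα₀pos hv0', mul_nonneg hε.le (sq_nonneg (dΦ ε x))]
        rcases mul_pos_iff.mp hpos' with ⟨_, h⟩ | ⟨h, _⟩
        · exact h
        · linarith
      · intro _
        have hb1 : (Φ ε 1 - c) ^ 2 ≤ A₂ ^ 2 := by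
          have h1 := hupper 1 (by norm_num)
          have h2 := hlower 1 (by norm_num)
          apply sq_le_sq' <;> linarith
        have hE11 : E2 (1:ℝ) = 1 := by rw [hE2_def]; norm_num
        have hE1pos : 0 < E1 (1:ℝ) := Real.exp_pos _
        show (Φ ε 1 - c) ^ 2 - A₂ ^ 2 * (E1 1 + E2 1) ≤ 0
        rw [hE11]
        nlinarith [sq_nonneg A₂]
      · intro _
        have hb1 : (Φ ε (-1) - c) ^ 2 ≤ A₂ ^ 2 := by
          have h1 := hupper (-1) (by norm_num)
          have h2 := hlower (-1) (by norm_num)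
          apply sq_le_sq' <;> linarith
        have hE11 : E1 (-1:ℝ) = 1 := by rw [hE1_def]; norm_num
        have hE2pos : 0 < E2 (-1:ℝ) := Real.exp_pos _
        show (Φ ε (-1) - c) ^ 2 - A₂ ^ 2 * (E1 (-1) + E2 (-1)) ≤ 0
        rw [hE11]
        nlinarith [sq_nonneg A₂]
    intro x hx
    have := hvle x (Ioo_subset_Icc_self hx)
    rw [hv_def] at this
    simp only at this
    linarith
  refine ⟨hbound, ?_⟩
  intro x hx
  have h1x : 0 < 1 + x := by linarith [hx.1]
  have h2x : 0 < 1 - x := by linarith [hx.2]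
  have hμtend : Tendsto (fun ε : ℝ => Real.sqrt (2 * α₀ / ε)) (𝓝[>] 0) atTop := by
    apply sqrt_tendsto_atTop.comp
    have h1 : Tendsto (fun ε : ℝ => ε⁻¹) (𝓝[>] (0:ℝ)) atTop := tendsto_inv_nhdsGT_zero
    exact (h1.const_mul_atTop (by positivity : (0:ℝ) < 2 * α₀)).congr
      fun ε => (div_eq_mul_inv (2 * α₀) ε).symm
  have hexp : ∀ a : ℝ, 0 < a →
      Tendsto (fun ε : ℝ => Real.exp (-a * Real.sqrt (2 * α₀ / ε))) (𝓝[>] 0) (𝓝 0) := by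
    intro a ha
    apply Real.tendsto_exp_atBot.comp
    have h1 : Tendsto (fun ε : ℝ => a * Real.sqrt (2 * α₀ / ε)) (𝓝[>] (0:ℝ)) atTop :=
      hμtend.const_mul_atTop ha
    have heq : (fun ε : ℝ => -a * Real.sqrt (2 * α₀ / ε))
        = fun ε : ℝ => -(a * Real.sqrt (2 * α₀ / ε)) := by funext ε; ring
    rw [heq]
    exact tendsto_neg_atBot_iff.mpr h1
  have hsq : Tendsto (fun ε : ℝ => (Φ ε x - c) ^ 2) (𝓝[>] (0:ℝ)) (𝓝 0) := by
    apply squeeze_zero' (Eventually.of_forall fun ε => sq_nonneg _)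
    · filter_upwards [self_mem_nhdsWithin] with ε hε
      exact hbound ε hε x hx
    · have := ((hexp (1 + x) h1x).add (hexp (1 - x) h2x)).const_mul (A₂ ^ 2)
      simpa using this
  have habs : Tendsto (fun ε : ℝ => |Φ ε x - c|) (𝓝[>] (0:ℝ)) (𝓝 0) := by
    have h := (Real.continuous_sqrt.tendsto 0).comp hsq
    rw [Real.sqrt_zero] at h
    refine h.congr fun ε => ?_
    simp [Real.sqrt_sq_eq_abs]
  have hsub : Tendsto (fun ε : ℝ => Φ ε x - c) (𝓝[>] (0:ℝ)) (𝓝 0) :=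
    (tendsto_zero_iff_abs_tendsto_zero _).mpr habs
  exact tendsto_sub_nhds_zero_iff.mp hsub
end
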